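/- arXiv:2002.06708 — 5 statements merged into one kernel-verified Lean document; each statement's English description precedes it below -/
import Mathlib

section
/- For every fixed (non-random) λ ∈ ℝ, the unbiased risk estimate URE(λ) = Tr(Σ_r D) + λ² ΔᵀDΔ − 2λ Tr(Σ_r D) satisfies E[URE(λ)] = E[L(τ, κ(λ))], i.e. URE(λ) is an unbiased estimate of the loss (in expectation equals the risk) of the shrinkage estimator κ(λ) = τ̂_r − λ(τ̂_r − τ̂_o). -/
open MeasureTheory ProbabilityTheory

section MyGaussHelpers
open MeasureTheory ProbabilityTheory Real Filter Asymptotics Topology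

section GaussAux

lemma my_tendsto_exp_neg_mul_sq {b : ℝ} (hb : 0 < b) :
    Tendsto (fun x : ℝ => rexp (-b * x ^ 2)) atTop (𝓝 0) :=
  tendsto_exp_atBot.comp
    ((tendsto_pow_atTop two_ne_zero).const_mul_atTop_of_neg (neg_lt_zero.2 hb))

lemma my_tendsto_exp_neg_mul_sq_atBot {b : ℝ} (hb : 0 < b) :
    Tendsto (fun x : ℝ => rexp (-b * x ^ 2)) atBot (𝓝 0) := by
  have h := (my_tendsto_exp_neg_mul_sq hb).comp tendsto_neg_atBot_atTop
  refine h.congr fun x => by simp [Function.comp]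

lemma my_tendsto_mul_exp_neg_mul_sq {b : ℝ} (hb : 0 < b) :
    Tendsto (fun x : ℝ => x * rexp (-b * x ^ 2)) atTop (𝓝 0) := by
  have h := rpow_mul_exp_neg_mul_sq_isLittleO_exp_neg hb 1
  simp only [Real.rpow_one] at h
  refine h.isBigO.trans_tendsto ?_
  exact tendsto_exp_atBot.comp
    (tendsto_id.const_mul_atTop_of_neg (show -(1/2:ℝ) < 0 by norm_num))

lemma my_tendsto_mul_exp_neg_mul_sq_atBot {b : ℝ} (hb : 0 < b) :
    Tendsto (fun x : ℝ => x * rexp (-b * x ^ 2)) atBot (𝓝 0) := by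
  have h := ((my_tendsto_mul_exp_neg_mul_sq hb).comp tendsto_neg_atBot_atTop).neg
  rw [neg_zero] at h
  refine h.congr fun x => ?_
  simp [Function.comp]

lemma my_integrable_sq_mul_exp_neg_mul_sq {b : ℝ} (hb : 0 < b) :
    Integrable (fun x : ℝ => x ^ 2 * rexp (-b * x ^ 2)) := by
  have h := integrable_rpow_mul_exp_neg_mul_sq hb (s := 2) (by norm_num)
  simpa [Real.rpow_natCast] using h

lemma my_integral_mul_exp_neg_mul_sq {b : ℝ} (hb : 0 < b) :
    ∫ x : ℝ, x * rexp (-b * x ^ 2) = 0 := by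
  have hderiv : ∀ x : ℝ, HasDerivAt (fun y : ℝ => -(2*b)⁻¹ * rexp (-b * y ^ 2))
      (x * rexp (-b * x ^ 2)) x := by
    intro x
    have h1 : HasDerivAt (fun y : ℝ => -b * y ^ 2) (-b * (2 * x)) x := by
      simpa using ((hasDerivAt_pow 2 x).const_mul (-b))
    have h2 := (h1.exp).const_mul (-(2*b)⁻¹)
    refine h2.congr_deriv ?_
    have hb0 : (2*b)⁻¹ * (2*b) = 1 := inv_mul_cancel₀ (by positivity)
    linear_combination (x * rexp (-b * x ^ 2)) * hb0
  have := integral_of_hasDerivAt_of_tendsto hderiv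
    (integrable_mul_exp_neg_mul_sq hb)
    (((my_tendsto_exp_neg_mul_sq_atBot hb).const_mul (-(2*b)⁻¹)).congr fun x => rfl)
    (((my_tendsto_exp_neg_mul_sq hb).const_mul (-(2*b)⁻¹)).congr fun x => rfl)
  simpa using this

lemma my_integral_sq_mul_exp_neg_mul_sq {b : ℝ} (hb : 0 < b) :
    ∫ x : ℝ, x ^ 2 * rexp (-b * x ^ 2)
      = (2*b)⁻¹ * ∫ x : ℝ, rexp (-b * x ^ 2) := by
  have hb' : (2*b) ≠ 0 := by positivity
  have hderiv : ∀ x : ℝ, HasDerivAt (fun y : ℝ => -(2*b)⁻¹ * (y * rexp (-b * y ^ 2)))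
      (x ^ 2 * rexp (-b * x ^ 2) - (2*b)⁻¹ * rexp (-b * x ^ 2)) x := by
    intro x
    have h1 : HasDerivAt (fun y : ℝ => -b * y ^ 2) (-b * (2 * x)) x := by
      simpa using ((hasDerivAt_pow 2 x).const_mul (-b))
    have h2 := ((hasDerivAt_id x).mul h1.exp).const_mul (-(2*b)⁻¹)
    refine h2.congr_deriv ?_
    have hb0 : (2*b)⁻¹ * (2*b) = 1 := inv_mul_cancel₀ hb'
    simp only [id_eq]
    linear_combination (x ^ 2 * rexp (-b * x ^ 2)) * hb0
  have hint : Integrable (fun x : ℝ =>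
      x ^ 2 * rexp (-b * x ^ 2) - (2*b)⁻¹ * rexp (-b * x ^ 2)) :=
    (my_integrable_sq_mul_exp_neg_mul_sq hb).sub
      ((integrable_exp_neg_mul_sq hb).const_mul _)
  have hz := integral_of_hasDerivAt_of_tendsto hderiv hint
    (((my_tendsto_mul_exp_neg_mul_sq_atBot hb).const_mul (-(2*b)⁻¹)).congr fun x => rfl)
    (((my_tendsto_mul_exp_neg_mul_sq hb).const_mul (-(2*b)⁻¹)).congr fun x => rfl)
  rw [integral_sub (my_integrable_sq_mul_exp_neg_mul_sq hb)
    ((integrable_exp_neg_mul_sq hb).const_mul _), integral_const_mul] at hz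
  simp only [mul_zero, sub_zero] at hz
  linarith [hz]

end GaussAux
end MyGaussHelpers
section GaussMoments

open scoped ENNReal NNReal

namespace ProbabilityTheory

lemma my_integral_gaussianReal {m : ℝ} {v : ℝ≥0} (hv : v ≠ 0) (f : ℝ → ℝ) :
    ∫ x, f x ∂(gaussianReal m v) = ∫ x, f x * gaussianPDFReal m v x := by
  rw [gaussianReal_of_var_ne_zero _ hv]
  have hpdf : gaussianPDF m v = fun x => ((gaussianPDFReal m v x).toNNReal : ℝ≥0∞) := rfl
  rw [hpdf, integral_withDensity_eq_integral_smul
    ((measurable_gaussianPDFReal m v).real_toNNReal) f]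
  refine integral_congr_ae (ae_of_all _ fun x => ?_)
  simp [NNReal.smul_def, Real.coe_toNNReal _ (gaussianPDFReal_nonneg m v x), mul_comm]

lemma my_integrable_gaussianReal_iff {m : ℝ} {v : ℝ≥0} (hv : v ≠ 0) (f : ℝ → ℝ) :
    Integrable f (gaussianReal m v)
      ↔ Integrable (fun x => f x * gaussianPDFReal m v x) := by
  rw [gaussianReal_of_var_ne_zero _ hv,
    integrable_withDensity_iff (measurable_gaussianPDF m v)
      (ae_of_all _ fun x => ENNReal.ofReal_lt_top)]
  refine integrable_congr (ae_of_all _ fun x => ?_)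
  simp [gaussianPDF, ENNReal.toReal_ofReal (gaussianPDFReal_nonneg m v x)]

lemma my_gaussianPDFReal_eq (m : ℝ) (v : ℝ≥0) (x : ℝ) :
    gaussianPDFReal m v x
      = (Real.sqrt (2 * Real.pi * v))⁻¹ * Real.exp (-(2*(v:ℝ))⁻¹ * (x - m) ^ 2) := by
  rw [gaussianPDFReal]
  congr 1
  congr 1
  field_simp

lemma my_b_pos {v : ℝ≥0} (hv : v ≠ 0) : 0 < (2*(v:ℝ))⁻¹ := by
  have : (0:ℝ) < v := by positivity
  positivity

lemma my_gauss_mass {v : ℝ≥0} (hv : v ≠ 0) :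
    (Real.sqrt (2 * Real.pi * v))⁻¹ * ∫ y : ℝ, Real.exp (-(2*(v:ℝ))⁻¹ * y ^ 2) = 1 := by
  have h := integral_gaussianPDFReal_eq_one 0 hv
  rw [← h, ← integral_const_mul]
  refine integral_congr_ae (ae_of_all _ fun x => ?_)
  rw [my_gaussianPDFReal_eq 0 v x]
  simp

lemma my_gauss_mean {m : ℝ} {v : ℝ≥0} (hv : v ≠ 0) : ∫ x, x ∂(gaussianReal m v) = m := by
  have hb : 0 < (2*(v:ℝ))⁻¹ := my_b_pos hv
  set b : ℝ := (2*(v:ℝ))⁻¹ with hbdef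
  set c : ℝ := (Real.sqrt (2 * Real.pi * v))⁻¹ with hcdef
  rw [my_integral_gaussianReal hv]
  have h2 : ∫ x : ℝ, x * gaussianPDFReal m v x
      = ∫ x : ℝ, ((x - m) + m) * (c * Real.exp (-b * (x - m) ^ 2)) := by
    refine integral_congr_ae (ae_of_all _ fun x => ?_)
    simp only
    rw [my_gaussianPDFReal_eq m v x]
    rw [hcdef, hbdef]
    ring_nf
  have hshift : ∫ x : ℝ, ((x - m) + m) * (c * Real.exp (-b * (x - m) ^ 2))
      = ∫ y : ℝ, (y + m) * (c * Real.exp (-b * y ^ 2)) :=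
    integral_sub_right_eq_self (fun y : ℝ => (y + m) * (c * Real.exp (-b * y ^ 2))) m
  have h3 : ∫ y : ℝ, (y + m) * (c * Real.exp (-b * y ^ 2))
      = ∫ y : ℝ, c * (y * Real.exp (-b * y ^ 2)) + (m * c) * Real.exp (-b * y ^ 2) := by
    refine integral_congr_ae (ae_of_all _ fun y => ?_); simp only; ring
  rw [h2, hshift, h3, integral_add
      ((integrable_mul_exp_neg_mul_sq hb).const_mul c)
      ((integrable_exp_neg_mul_sq hb).const_mul (m * c)),
    integral_const_mul, integral_const_mul, my_integral_mul_exp_neg_mul_sq hb]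
  have h4 := my_gauss_mass hv
  rw [← hcdef, ← hbdef] at h4
  rw [mul_zero, zero_add, mul_assoc, h4, mul_one]

lemma my_gauss_centered_sq {m : ℝ} {v : ℝ≥0} (hv : v ≠ 0) :
    ∫ x, (x - m) ^ 2 ∂(gaussianReal m v) = (v:ℝ) := by
  have hb : 0 < (2*(v:ℝ))⁻¹ := my_b_pos hv
  have hv' : (0:ℝ) < v := by positivity
  set b : ℝ := (2*(v:ℝ))⁻¹ with hbdef
  set c : ℝ := (Real.sqrt (2 * Real.pi * v))⁻¹ with hcdef
  rw [my_integral_gaussianReal hv]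
  have h2 : ∫ x : ℝ, (x - m) ^ 2 * gaussianPDFReal m v x
      = ∫ x : ℝ, (x - m) ^ 2 * (c * Real.exp (-b * (x - m) ^ 2)) := by
    refine integral_congr_ae (ae_of_all _ fun x => ?_)
    simp only
    rw [my_gaussianPDFReal_eq m v x]
  have hshift : ∫ x : ℝ, (x - m) ^ 2 * (c * Real.exp (-b * (x - m) ^ 2))
      = ∫ y : ℝ, y ^ 2 * (c * Real.exp (-b * y ^ 2)) :=
    integral_sub_right_eq_self (fun y : ℝ => y ^ 2 * (c * Real.exp (-b * y ^ 2))) m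
  have h3 : ∫ y : ℝ, y ^ 2 * (c * Real.exp (-b * y ^ 2))
      = c * ∫ y : ℝ, y ^ 2 * Real.exp (-b * y ^ 2) := by
    rw [← integral_const_mul]
    refine integral_congr_ae (ae_of_all _ fun y => ?_); simp only; ring
  rw [h2, hshift, h3, my_integral_sq_mul_exp_neg_mul_sq hb]
  have h4 := my_gauss_mass hv
  rw [← hcdef, ← hbdef] at h4
  have h6 : (2*b)⁻¹ = (v:ℝ) := by
    rw [hbdef]; field_simp
  rw [show c * ((2*b)⁻¹ * ∫ y : ℝ, Real.exp (-b * y ^ 2))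
      = (2*b)⁻¹ * (c * ∫ y : ℝ, Real.exp (-b * y ^ 2)) by ring, h4, h6, mul_one]

lemma my_gauss_memLp {m : ℝ} {v : ℝ≥0} (hv : v ≠ 0) :
    MemLp (fun x : ℝ => x) 2 (gaussianReal m v) := by
  have hb : 0 < (2*(v:ℝ))⁻¹ := my_b_pos hv
  set b : ℝ := (2*(v:ℝ))⁻¹ with hbdef
  set c : ℝ := (Real.sqrt (2 * Real.pi * v))⁻¹ with hcdef
  refine (memLp_two_iff_integrable_sq measurable_id.aestronglyMeasurable).mpr ?_
  rw [my_integrable_gaussianReal_iff hv]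
  have h1 : Integrable (fun y : ℝ => (y + m) ^ 2 * (c * Real.exp (-b * y ^ 2))) := by
    have heq : (fun y : ℝ => (y + m) ^ 2 * (c * Real.exp (-b * y ^ 2)))
        = fun y : ℝ => c * (y ^ 2 * Real.exp (-b * y ^ 2))
          + ((2*m*c) * (y * Real.exp (-b * y ^ 2))
            + (m^2*c) * Real.exp (-b * y ^ 2)) := by
      funext y; ring
    rw [heq]
    exact ((my_integrable_sq_mul_exp_neg_mul_sq hb).const_mul c).add
      (((integrable_mul_exp_neg_mul_sq hb).const_mul _).add
        ((integrable_exp_neg_mul_sq hb).const_mul _))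
  refine (h1.comp_sub_right m).congr ?_
  refine ae_of_all _ fun x => ?_
  simp only
  rw [my_gaussianPDFReal_eq m v x]
  simp only [id_eq]
  rw [hcdef, hbdef]
  ring_nf

end ProbabilityTheory
end GaussMoments

open scoped NNReal

/-- **Unbiasedness of the URE for a fixed shrinkage factor.**
For every fixed (non-random) `l ∈ ℝ`, the unbiased risk estimate
`URE(l) = Tr(Σ_r D) + l² ΔᵀDΔ − 2l Tr(Σ_r D)` has expectation equal to the risk
(expected weighted quadratic loss) of the shrinkage estimator
`κ(l) = τ̂_r − l (τ̂_r − τ̂_o)`, where `D = (1/K)·diag(d₁,…,d_K)` and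
`Δ = τ̂_o − τ̂_r`. -/
theorem ure_unbiased_common_shrinkage
    {Ω : Type*} [MeasurableSpace Ω] (μ : Measure Ω) [IsProbabilityMeasure μ]
    (K : ℕ) (hK : 1 ≤ K)
    (d σr σo ξ τ : Fin K → ℝ)
    (hd : ∀ k, 0 < d k) (hdsum : ∑ k, d k = 1)
    (hσr : ∀ k, 0 < σr k)
    (τr τo : Ω → Fin K → ℝ)
    (hτr_meas : ∀ k, Measurable fun ω => τr ω k)
    (hτo_meas : ∀ k, Measurable fun ω => τo ω k)
    (hτr_gauss : ∀ k, μ.map (fun ω => τr ω k)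
        = gaussianReal (τ k) ⟨σr k ^ 2, sq_nonneg _⟩)
    (hτr_indep : iIndepFun (fun k ω => τr ω k) μ)
    (hτo_indep : iIndepFun (fun k ω => τo ω k) μ)
    (hro_indep : IndepFun (fun ω => τr ω) (fun ω => τo ω) μ)
    (hτo_mem : ∀ k, MemLp (fun ω => τo ω k) 2 μ)
    (hτo_mean : ∀ k, ∫ ω, τo ω k ∂μ = τ k + ξ k)
    (hτo_var : ∀ k, variance (fun ω => τo ω k) μ = σo k ^ 2)
    (l : ℝ) :
    ∫ ω, ((∑ k, σr k ^ 2 * (d k / K))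
        + l ^ 2 * ∑ k, (d k / K) * (τo ω k - τr ω k) ^ 2
        - 2 * l * ∑ k, σr k ^ 2 * (d k / K)) ∂μ
      = ∫ ω, ∑ k, (d k / K) * ((τr ω k - l * (τr ω k - τo ω k)) - τ k) ^ 2 ∂μ := by
  classical
  -- variance parameters are nonzero
  have hvne : ∀ k, (⟨σr k ^ 2, sq_nonneg _⟩ : ℝ≥0) ≠ 0 := fun k h => by
    have hne : σr k ^ 2 ≠ 0 := pow_ne_zero _ (hσr k).ne'
    exact hne (congrArg NNReal.toReal h)
  -- L² membership of the Gaussian coordinates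
  have hX2 : ∀ k, MemLp (fun ω => τr ω k) 2 μ := by
    intro k
    have h := ProbabilityTheory.my_gauss_memLp (m := τ k) (hvne k)
    rw [← hτr_gauss k] at h
    exact (memLp_map_measure_iff measurable_id.aestronglyMeasurable
      (hτr_meas k).aemeasurable).mp h
  -- mean of the Gaussian coordinates
  have hXmean : ∀ k, ∫ ω, τr ω k ∂μ = τ k := by
    intro k
    have h := integral_map (μ := μ) (hτr_meas k).aemeasurable
      (f := fun x : ℝ => x) measurable_id.aestronglyMeasurable
    rw [hτr_gauss k] at h
    rw [← h, ProbabilityTheory.my_gauss_mean (hvne k)]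
  -- centered second moment of the Gaussian coordinates
  have hAsq : ∀ k, ∫ ω, (τr ω k - τ k) ^ 2 ∂μ = σr k ^ 2 := by
    intro k
    have h := integral_map (μ := μ) (hτr_meas k).aemeasurable
      (f := fun x : ℝ => (x - τ k) ^ 2)
      ((measurable_id.sub_const _).pow_const 2).aestronglyMeasurable
    rw [hτr_gauss k] at h
    rw [← h, ProbabilityTheory.my_gauss_centered_sq (hvne k)]
    rfl
  -- centered variables
  have hA2 : ∀ k, MemLp (fun ω => τr ω k - τ k) 2 μ :=
    fun k => (hX2 k).sub (memLp_const _)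
  have hB2 : ∀ k, MemLp (fun ω => τo ω k - τ k) 2 μ :=
    fun k => (hτo_mem k).sub (memLp_const _)
  have hAmean : ∀ k, ∫ ω, (τr ω k - τ k) ∂μ = 0 := by
    intro k
    rw [integral_sub ((hX2 k).integrable one_le_two) (integrable_const _),
      hXmean k, integral_const]
    simp
  -- independence of the centered coordinates
  have hAB : ∀ k, IndepFun (fun ω => τr ω k - τ k) (fun ω => τo ω k - τ k) μ := by
    intro k
    exact hro_indep.comp (φ := fun v : Fin K → ℝ => v k - τ k)
      (ψ := fun v : Fin K → ℝ => v k - τ k)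
      ((measurable_pi_apply k).sub_const _) ((measurable_pi_apply k).sub_const _)
  have hABint : ∀ k, Integrable (fun ω => (τr ω k - τ k) * (τo ω k - τ k)) μ :=
    fun k => (hAB k).integrable_mul ((hA2 k).integrable one_le_two)
      ((hB2 k).integrable one_le_two)
  have hABzero : ∀ k, ∫ ω, (τr ω k - τ k) * (τo ω k - τ k) ∂μ = 0 := by
    intro k
    have h : ∫ ω, (τr ω k - τ k) * (τo ω k - τ k) ∂μ
        = (∫ ω, (τr ω k - τ k) ∂μ) * ∫ ω, (τo ω k - τ k) ∂μ :=
      (hAB k).integral_mul_eq_mul_integral (hA2 k).aestronglyMeasurable (hB2 k).aestronglyMeasurable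
    rw [h, hAmean k, zero_mul]
  -- key per-coordinate computations
  have key1 : ∀ k, ∫ ω, (τo ω k - τr ω k) ^ 2 ∂μ
      = σr k ^ 2 + ∫ ω, (τo ω k - τ k) ^ 2 ∂μ := by
    intro k
    have hst : (fun ω => (τo ω k - τr ω k) ^ 2)
        = fun ω => ((τo ω k - τ k) ^ 2 + (τr ω k - τ k) ^ 2)
            - 2 * ((τr ω k - τ k) * (τo ω k - τ k)) := by
      funext ω; ring
    have hi1 : Integrable (fun ω => (τo ω k - τ k) ^ 2 + (τr ω k - τ k) ^ 2) μ :=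
      (hB2 k).integrable_sq.add (hA2 k).integrable_sq
    have hi2 : Integrable (fun ω => 2 * ((τr ω k - τ k) * (τo ω k - τ k))) μ :=
      (hABint k).const_mul 2
    rw [hst, integral_sub hi1 hi2,
      integral_add (hB2 k).integrable_sq (hA2 k).integrable_sq,
      integral_const_mul, hABzero k, hAsq k]
    ring
  have key2 : ∀ k, ∫ ω, ((τr ω k - l * (τr ω k - τo ω k)) - τ k) ^ 2 ∂μ
      = (1 - l) ^ 2 * σr k ^ 2 + l ^ 2 * ∫ ω, (τo ω k - τ k) ^ 2 ∂μ := by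
    intro k
    have hst : (fun ω => ((τr ω k - l * (τr ω k - τo ω k)) - τ k) ^ 2)
        = fun ω => ((1 - l) ^ 2 * (τr ω k - τ k) ^ 2
              + l ^ 2 * (τo ω k - τ k) ^ 2)
            + (2 * (1 - l) * l) * ((τr ω k - τ k) * (τo ω k - τ k)) := by
      funext ω; ring
    have hi1 : Integrable (fun ω => (1 - l) ^ 2 * (τr ω k - τ k) ^ 2
        + l ^ 2 * (τo ω k - τ k) ^ 2) μ :=
      ((hA2 k).integrable_sq.const_mul _).add ((hB2 k).integrable_sq.const_mul _)
    have hi2 : Integrable (fun ω => (2 * (1 - l) * l)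
        * ((τr ω k - τ k) * (τo ω k - τ k))) μ := (hABint k).const_mul _
    have hi3 : Integrable (fun ω => (1 - l) ^ 2 * (τr ω k - τ k) ^ 2) μ :=
      (hA2 k).integrable_sq.const_mul _
    have hi4 : Integrable (fun ω => l ^ 2 * (τo ω k - τ k) ^ 2) μ :=
      (hB2 k).integrable_sq.const_mul _
    rw [hst, integral_add hi1 hi2, integral_add hi3 hi4,
      integral_const_mul, integral_const_mul, integral_const_mul, hABzero k, hAsq k]
    ring
  -- integrability of the summed quantities
  have hDint : ∀ k, Integrable (fun ω => (d k / (K:ℝ)) * (τo ω k - τr ω k) ^ 2) μ :=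
    fun k => ((hτo_mem k).sub (hX2 k)).integrable_sq.const_mul _
  have hS : Integrable (fun ω => ∑ k, (d k / (K:ℝ)) * (τo ω k - τr ω k) ^ 2) μ :=
    integrable_finset_sum _ (fun k _ => hDint k)
  have hRmem : ∀ k, MemLp (fun ω => (τr ω k - l * (τr ω k - τo ω k)) - τ k) 2 μ :=
    fun k => ((hX2 k).sub (((hX2 k).sub (hτo_mem k)).const_mul l)).sub (memLp_const _)
  have hRint : ∀ k, Integrable
      (fun ω => (d k / (K:ℝ)) * ((τr ω k - l * (τr ω k - τo ω k)) - τ k) ^ 2) μ :=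
    fun k => (hRmem k).integrable_sq.const_mul _
  -- compute both sides
  have h1 : Integrable (fun ω => (∑ k, σr k ^ 2 * (d k / (K:ℝ)))
      + l ^ 2 * ∑ k, (d k / (K:ℝ)) * (τo ω k - τr ω k) ^ 2) μ :=
    (integrable_const _).add (hS.const_mul _)
  have h2 : Integrable (fun ω => l ^ 2 * ∑ k, (d k / (K:ℝ)) * (τo ω k - τr ω k) ^ 2) μ :=
    hS.const_mul _
  rw [integral_sub h1 (integrable_const _), integral_add (integrable_const _) h2,
    integral_const, integral_const, integral_const_mul,
    integral_finset_sum _ (fun k _ => hDint k),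
    integral_finset_sum _ (fun k _ => hRint k)]
  have hsumL : ∀ k, ∫ ω, (d k / (K:ℝ)) * (τo ω k - τr ω k) ^ 2 ∂μ
      = (d k / (K:ℝ)) * (σr k ^ 2 + ∫ ω, (τo ω k - τ k) ^ 2 ∂μ) := by
    intro k; rw [integral_const_mul, key1 k]
  have hsumR : ∀ k, ∫ ω, (d k / (K:ℝ)) * ((τr ω k - l * (τr ω k - τo ω k)) - τ k) ^ 2 ∂μ
      = (d k / (K:ℝ)) * ((1 - l) ^ 2 * σr k ^ 2
          + l ^ 2 * ∫ ω, (τo ω k - τ k) ^ 2 ∂μ) := by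
    intro k; rw [integral_const_mul, key2 k]
  rw [Finset.sum_congr rfl fun k _ => hsumL k, Finset.sum_congr rfl fun k _ => hsumR k]
  simp only [measure_univ, ENNReal.toReal_one, probReal_univ, smul_eq_mul, one_mul, one_smul]
  rw [Finset.mul_sum, Finset.mul_sum, ← Finset.sum_add_distrib, ← Finset.sum_sub_distrib]
  exact Finset.sum_congr rfl fun k _ => by ring
end

section
/- The risk of the fixed-factor shrinkage estimator κ(λ) = τ̂_r − λ(τ̂_r − τ̂_o) equals R(λ) = (1 − λ)² Tr(Σ_r D) + λ² (Tr(Σ_o D) + ξᵀ D ξ), and over λ ∈ ℝ it is uniquely minimized at the oracle shrinkage factor λ_opt = Tr(Σ_r D) / (Tr(Σ_r D) + Tr(Σ_o D) + ξᵀ D ξ). -/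
open MeasureTheory ProbabilityTheory Real
open scoped NNReal ENNReal


lemma aux_rpow_two (x : ℝ) : x ^ (2:ℝ) = x ^ 2 := by
  rw [show (2:ℝ) = ((2:ℕ):ℝ) by norm_num, Real.rpow_natCast]

lemma gauss_int_sq {b : ℝ} (hb : 0 < b) :
    ∫ x : ℝ, x ^ 2 * Real.exp (-b * x ^ 2) = Real.sqrt π / 2 * b ^ (-(3:ℝ)/2) := by
  have heven : (fun x : ℝ => x ^ 2 * Real.exp (-b * x ^ 2))
      = fun x : ℝ => |x| ^ 2 * Real.exp (-b * |x| ^ 2) := by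
    funext x; rw [sq_abs]
  rw [heven]
  rw [integral_comp_abs (f := fun x : ℝ => x ^ 2 * Real.exp (-b * x ^ 2))]
  have h1 : ∫ x in Set.Ioi (0:ℝ), x ^ 2 * Real.exp (-b * x ^ 2)
      = b ^ (-((2:ℝ) + 1) / 2) * (1 / 2) * Real.Gamma (((2:ℝ) + 1) / 2) := by
    rw [← integral_rpow_mul_exp_neg_mul_rpow (by norm_num : (0:ℝ) < 2) (by norm_num) hb]
    refine setIntegral_congr_fun measurableSet_Ioi (fun x _ => ?_)
    simp [aux_rpow_two]
  rw [h1]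
  have h2 : Real.Gamma (((2:ℝ) + 1) / 2) = Real.sqrt π / 2 := by
    rw [show ((2:ℝ) + 1) / 2 = 1/2 + 1 by norm_num, Real.Gamma_add_one (by norm_num),
      Real.Gamma_one_half_eq]
    ring
  rw [h2]
  ring_nf

lemma integral_gaussianReal_eq {m : ℝ} {v : ℝ≥0} (hv : v ≠ 0) (g : ℝ → ℝ) :
    ∫ x, g x ∂(gaussianReal m v) = ∫ x, gaussianPDFReal m v x * g x := by
  rw [gaussianReal_of_var_ne_zero m hv]
  have h : gaussianPDF m v = fun x => ((gaussianPDFReal m v x).toNNReal : ℝ≥0∞) := rfl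
  rw [h, integral_withDensity_eq_integral_smul (measurable_gaussianPDFReal m v).real_toNNReal g]
  congr 1; funext x
  simp [NNReal.smul_def, Real.coe_toNNReal _ (gaussianPDFReal_nonneg m v x)]

lemma integrable_gaussianReal_iff {m : ℝ} {v : ℝ≥0} (hv : v ≠ 0) (g : ℝ → ℝ) :
    Integrable g (gaussianReal m v)
      ↔ Integrable (fun x => g x * gaussianPDFReal m v x) volume := by
  rw [gaussianReal_of_var_ne_zero m hv,
    integrable_withDensity_iff (measurable_gaussianPDF m v)
      (ae_of_all _ fun x => (by rw [gaussianPDF]; exact ENNReal.ofReal_lt_top : gaussianPDF m v x < ⊤))]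
  simp_rw [gaussianPDF, ENNReal.toReal_ofReal (gaussianPDFReal_nonneg m v _)]

lemma pdf0_eq {v : ℝ≥0} (y : ℝ) :
    gaussianPDFReal 0 v y = (√(2*π*(v:ℝ)))⁻¹ * Real.exp (-(2*(v:ℝ))⁻¹ * y^2) := by
  rw [gaussianPDFReal]
  congr 1
  rw [sub_zero]
  by_cases hv : (v:ℝ) = 0
  · simp [hv]
  · field_simp

lemma gauss_centered_integral {m : ℝ} {v : ℝ≥0} (hv : v ≠ 0) (g : ℝ → ℝ) :
    ∫ x, g (x - m) ∂(gaussianReal m v) = ∫ x, gaussianPDFReal 0 v x * g x := by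
  rw [integral_gaussianReal_eq hv]
  rw [← integral_sub_right_eq_self (fun x => gaussianPDFReal 0 v x * g x) m]
  congr 1; funext x
  rw [gaussianPDFReal_sub, zero_add]

lemma gauss_mean_centered {m : ℝ} {v : ℝ≥0} (hv : v ≠ 0) :
    ∫ x, (x - m) ∂(gaussianReal m v) = 0 := by
  have h := gauss_centered_integral (m := m) hv (fun y => y)
  rw [show (fun x : ℝ => x - m) = fun x => (fun y : ℝ => y) (x - m) from rfl] at *
  rw [h]
  have hodd : ∀ x : ℝ, gaussianPDFReal 0 v (-x) * (-x) = -(gaussianPDFReal 0 v x * x) := by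
    intro x
    rw [pdf0_eq, pdf0_eq, neg_sq]
    ring
  have hneg := MeasureTheory.integral_neg_eq_self
    (fun x => gaussianPDFReal 0 v x * x) (volume : Measure ℝ)
  simp_rw [hodd, integral_neg] at hneg
  linarith

lemma gauss_var_centered {m : ℝ} {v : ℝ≥0} (hv : v ≠ 0) :
    ∫ x, (x - m)^2 ∂(gaussianReal m v) = v := by
  have h := gauss_centered_integral (m := m) hv (fun y => y^2)
  rw [show (fun x : ℝ => (x - m)^2) = fun x => (fun y : ℝ => y^2) (x - m) from rfl, h]
  have hvpos : (0:ℝ) < v := by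
    exact_mod_cast (zero_le : (0:ℝ≥0) ≤ v).lt_of_ne (Ne.symm hv)
  have h2v : (0:ℝ) < 2 * v := by positivity
  have hb : (0:ℝ) < (2*(v:ℝ))⁻¹ := by positivity
  simp_rw [pdf0_eq, mul_assoc]
  rw [MeasureTheory.integral_const_mul]
  have : ∫ x : ℝ, Real.exp (-(2*(v:ℝ))⁻¹ * x^2) * x^2
      = ∫ x : ℝ, x^2 * Real.exp (-(2*(v:ℝ))⁻¹ * x^2) := by
    congr 1; funext x; ring
  rw [this, gauss_int_sq hb]
  have hbval : ((2*(v:ℝ))⁻¹) ^ (-(3:ℝ)/2) = (2*(v:ℝ)) * Real.sqrt (2*(v:ℝ)) := by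
    rw [show (-(3:ℝ)/2) = -((3:ℝ)/2) by norm_num, Real.inv_rpow h2v.le,
      Real.rpow_neg h2v.le, inv_inv, show ((3:ℝ)/2) = 1 + 1/2 by norm_num,
      Real.rpow_add h2v, Real.rpow_one, ← Real.sqrt_eq_rpow]
  rw [hbval]
  have hsplit : Real.sqrt (2 * (π * (v:ℝ))) = Real.sqrt π * Real.sqrt (2*(v:ℝ)) := by
    rw [show 2*(π*(v:ℝ)) = π*(2*(v:ℝ)) by ring, Real.sqrt_mul Real.pi_pos.le]
  rw [hsplit]
  have hπ : Real.sqrt π ≠ 0 := by positivity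
  have hsq : Real.sqrt (2*(v:ℝ)) ≠ 0 := by positivity
  field_simp

lemma gauss_integrable_centered {m : ℝ} {v : ℝ≥0} (hv : v ≠ 0) :
    Integrable (fun x => x - m) (gaussianReal m v) := by
  rw [integrable_gaussianReal_iff hv]
  have heq : (fun x : ℝ => (x - m) * gaussianPDFReal m v x)
      = fun x => (fun y => y * gaussianPDFReal 0 v y) (x - m) := by
    funext x; simp only [gaussianPDFReal_sub, zero_add]
  rw [heq]
  have hb : (0:ℝ) < (2*(v:ℝ))⁻¹ := by
    have hvpos : (0:ℝ) < v := by exact_mod_cast (zero_le : (0:ℝ≥0) ≤ v).lt_of_ne (Ne.symm hv)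
    positivity
  have h1 : Integrable (fun y : ℝ => (√(2*π*(v:ℝ)))⁻¹ * (y * Real.exp (-(2*(v:ℝ))⁻¹ * y^2))) :=
    (integrable_mul_exp_neg_mul_sq hb).const_mul _
  have h2 : Integrable (fun y : ℝ => y * gaussianPDFReal 0 v y) := by
    refine h1.congr (ae_of_all _ fun y => ?_)
    simp only [pdf0_eq]
    ring
  exact h2.comp_sub_right m

lemma gauss_integrable_centered_sq {m : ℝ} {v : ℝ≥0} (hv : v ≠ 0) :
    Integrable (fun x => (x - m)^2) (gaussianReal m v) := by
  rw [integrable_gaussianReal_iff hv]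
  have heq : (fun x : ℝ => (x - m)^2 * gaussianPDFReal m v x)
      = fun x => (fun y => y^2 * gaussianPDFReal 0 v y) (x - m) := by
    funext x; simp only [gaussianPDFReal_sub, zero_add]
  rw [heq]
  have hb : (0:ℝ) < (2*(v:ℝ))⁻¹ := by
    have hvpos : (0:ℝ) < v := by exact_mod_cast (zero_le : (0:ℝ≥0) ≤ v).lt_of_ne (Ne.symm hv)
    positivity
  have h0 : Integrable (fun y : ℝ => y ^ (2:ℝ) * Real.exp (-(2*(v:ℝ))⁻¹ * y^2)) :=
    integrable_rpow_mul_exp_neg_mul_sq hb (by norm_num)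
  have h1 : Integrable (fun y : ℝ => y ^ 2 * Real.exp (-(2*(v:ℝ))⁻¹ * y^2)) := by
    simpa [aux_rpow_two] using h0
  have h1' : Integrable (fun y : ℝ => (√(2*π*(v:ℝ)))⁻¹ * (y^2 * Real.exp (-(2*(v:ℝ))⁻¹ * y^2))) :=
    h1.const_mul _
  have h2 : Integrable (fun y : ℝ => y^2 * gaussianPDFReal 0 v y) := by
    refine h1'.congr (ae_of_all _ fun y => ?_)
    simp only [pdf0_eq]
    ring
  exact h2.comp_sub_right m

lemma quad_strict_min {A B l m : ℝ} (hA : 0 < A) (hB : 0 ≤ B)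
    (hm : m = A / (A + B)) (hl : l ≠ m) :
    (1-m)^2 * A + m^2 * B < (1-l)^2 * A + l^2 * B := by
  have hS : 0 < A + B := by linarith
  have hkey : (1-l)^2 * A + l^2 * B - ((1-m)^2 * A + m^2 * B)
      = (A + B) * (l - m)^2 := by
    subst hm
    field_simp
    ring
  have hne : l - m ≠ 0 := sub_ne_zero.mpr hl
  have hpos : 0 < (A + B) * (l - m)^2 :=
    mul_pos hS (pow_two_pos_of_ne_zero hne)
  linarith

/-- **Risk of the fixed-factor shrinkage estimator and the oracle shrinkage factor.**
The risk of `κ(l) = τ̂_r − l(τ̂_r − τ̂_o)` equals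
`R(l) = (1−l)² Tr(Σ_r D) + l² (Tr(Σ_o D) + ξᵀDξ)`, and over `l ∈ ℝ` it is
uniquely minimized at `l_opt = Tr(Σ_r D)/(Tr(Σ_r D) + Tr(Σ_o D) + ξᵀDξ)`. -/
theorem risk_fixed_shrinkage_and_oracle_minimizer
{Ω : Type*} [MeasurableSpace Ω] (μ : Measure Ω) [IsProbabilityMeasure μ]
    (K : ℕ) (hK : 1 ≤ K)
    (d σr σo ξ τ : Fin K → ℝ)
    (hd : ∀ k, 0 < d k) (hdsum : ∑ k, d k = 1)
    (hσr : ∀ k, 0 < σr k)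
    (τr τo : Ω → Fin K → ℝ)
    (hτr_meas : ∀ k, Measurable fun ω => τr ω k)
    (hτo_meas : ∀ k, Measurable fun ω => τo ω k)
    (hτr_gauss : ∀ k, μ.map (fun ω => τr ω k)
        = gaussianReal (τ k) ⟨σr k ^ 2, sq_nonneg _⟩)
    (hτr_indep : iIndepFun (fun k ω => τr ω k) μ)
    (hτo_indep : iIndepFun (fun k ω => τo ω k) μ)
    (hro_indep : IndepFun (fun ω => τr ω) (fun ω => τo ω) μ)
    (hτo_mem : ∀ k, MemLp (fun ω => τo ω k) 2 μ)
    (hτo_mean : ∀ k, ∫ ω, τo ω k ∂μ = τ k + ξ k)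
    (hτo_var : ∀ k, variance (fun ω => τo ω k) μ = σo k ^ 2)
    (R : ℝ → ℝ)
    (hR : ∀ l : ℝ, R l
      = ∫ ω, ∑ k, (d k / K) * ((τr ω k - l * (τr ω k - τo ω k)) - τ k) ^ 2 ∂μ)
    (lopt : ℝ)
    (hlopt : lopt = (∑ k, σr k ^ 2 * (d k / K))
        / ((∑ k, σr k ^ 2 * (d k / K)) + (∑ k, σo k ^ 2 * (d k / K))
            + ∑ k, (d k / K) * ξ k ^ 2)) :
    (∀ l : ℝ, R l
        = (1 - l) ^ 2 * (∑ k, σr k ^ 2 * (d k / K))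
          + l ^ 2 * ((∑ k, σo k ^ 2 * (d k / K)) + ∑ k, (d k / K) * ξ k ^ 2))
      ∧ (∀ l : ℝ, l ≠ lopt → R lopt < R l) := by
  have hKpos : (0:ℝ) < K := by exact_mod_cast hK
  have hv : ∀ k, (⟨σr k ^ 2, sq_nonneg _⟩ : ℝ≥0) ≠ 0 := by
    intro k h
    have h2 := congrArg (fun x : ℝ≥0 => (x:ℝ)) h
    change σr k ^ 2 = 0 at h2
    exact (pow_pos (hσr k) 2).ne' h2
  -- facts about X k = τr · k - τ k
  have hXmeas : ∀ k, Measurable (fun ω => τr ω k - τ k) :=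
    fun k => (hτr_meas k).sub measurable_const
  have hXint : ∀ k, Integrable (fun ω => τr ω k - τ k) μ := by
    intro k
    have h := gauss_integrable_centered (m := τ k) (hv k)
    rw [← hτr_gauss k] at h
    have := (integrable_map_measure h.aestronglyMeasurable
      (hτr_meas k).aemeasurable).mp h
    simpa [Function.comp_def] using this
  have hX2int : ∀ k, Integrable (fun ω => (τr ω k - τ k)^2) μ := by
    intro k
    have h := gauss_integrable_centered_sq (m := τ k) (hv k)
    rw [← hτr_gauss k] at h
    have := (integrable_map_measure h.aestronglyMeasurable
      (hτr_meas k).aemeasurable).mp h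
    simpa [Function.comp_def] using this
  have hXmean : ∀ k, ∫ ω, (τr ω k - τ k) ∂μ = 0 := by
    intro k
    have h : ∫ ω, (τr ω k - τ k) ∂μ
        = ∫ x, (x - τ k) ∂(μ.map fun ω => τr ω k) :=
      (integral_map (hτr_meas k).aemeasurable
        ((measurable_id.sub_const (τ k)).aestronglyMeasurable)).symm
    rw [h, hτr_gauss k, gauss_mean_centered (hv k)]
  have hX2mean : ∀ k, ∫ ω, (τr ω k - τ k)^2 ∂μ = σr k ^ 2 := by
    intro k
    have h : ∫ ω, (τr ω k - τ k)^2 ∂μ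
        = ∫ x, (x - τ k)^2 ∂(μ.map fun ω => τr ω k) :=
      (integral_map (hτr_meas k).aemeasurable
        (((measurable_id.sub_const (τ k)).pow_const 2).aestronglyMeasurable)).symm
    rw [h, hτr_gauss k]
    exact gauss_var_centered (hv k)
  -- facts about Y k = τo · k - τ k
  have hYmem : ∀ k, MemLp (fun ω => τo ω k - τ k) 2 μ :=
    fun k => (hτo_mem k).sub (memLp_const (τ k))
  have hYint : ∀ k, Integrable (fun ω => τo ω k - τ k) μ :=
    fun k => (hYmem k).integrable one_le_two
  have hY2int : ∀ k, Integrable (fun ω => (τo ω k - τ k)^2) μ :=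
    fun k => (hYmem k).integrable_sq
  have hτoint : ∀ k, Integrable (fun ω => τo ω k) μ :=
    fun k => (hτo_mem k).integrable one_le_two
  have hYmean : ∀ k, ∫ ω, (τo ω k - τ k) ∂μ = ξ k := by
    intro k
    rw [integral_sub (hτoint k) (integrable_const _), hτo_mean k, integral_const]
    simp [measure_univ]
  have hY2mean : ∀ k, ∫ ω, (τo ω k - τ k)^2 ∂μ = σo k ^ 2 + ξ k ^ 2 := by
    intro k
    have hvar := variance_eq_sub (hτo_mem k)
    rw [hτo_var k] at hvar
    simp only [Pi.pow_apply] at hvar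
    rw [hτo_mean k] at hvar
    have h2 : Integrable (fun ω => τo ω k ^ 2) μ := (hτo_mem k).integrable_sq
    have hexp : (fun ω => (τo ω k - τ k)^2)
        = fun ω => τo ω k ^ 2 - (2 * τ k * τo ω k - τ k ^ 2) := by
      funext ω; ring
    have h3 : Integrable (fun ω => 2 * τ k * τo ω k - τ k ^ 2) μ :=
      ((hτoint k).const_mul (2 * τ k)).sub (integrable_const _)
    have h4 : Integrable (fun ω => 2 * τ k * τo ω k) μ := (hτoint k).const_mul (2 * τ k)
    rw [hexp, integral_sub h2 h3, integral_sub h4 (integrable_const _),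
      integral_const_mul, hτo_mean k, integral_const]
    simp only [measure_univ, probReal_univ, ENNReal.toReal_one, smul_eq_mul, one_mul]
    nlinarith [hvar]
  -- cross terms
  have hXYind : ∀ k, IndepFun (fun ω => τr ω k - τ k) (fun ω => τo ω k - τ k) μ := by
    intro k
    exact hro_indep.comp ((measurable_pi_apply k).sub measurable_const)
      ((measurable_pi_apply k).sub measurable_const)
  have hXYint : ∀ k, Integrable (fun ω => (τr ω k - τ k) * (τo ω k - τ k)) μ :=
    fun k => (hXYind k).integrable_mul (hXint k) (hYint k)
  have hXYmean : ∀ k, ∫ ω, (τr ω k - τ k) * (τo ω k - τ k) ∂μ = 0 := by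
    intro k
    rw [(hXYind k).integral_fun_mul_eq_mul_integral (hXmeas k).aestronglyMeasurable
      ((hτo_meas k).sub measurable_const).aestronglyMeasurable,
      hXmean k, hYmean k]
    ring
  -- per-coordinate risk
  have key : ∀ (l : ℝ) (k : Fin K),
      ∫ ω, ((τr ω k - l * (τr ω k - τo ω k)) - τ k)^2 ∂μ
        = (1-l)^2 * σr k ^ 2 + l^2 * (σo k ^ 2 + ξ k ^ 2) := by
    intro l k
    have hptwise : ∀ ω, ((τr ω k - l * (τr ω k - τo ω k)) - τ k)^2
        = (1-l)^2 * (τr ω k - τ k)^2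
          + ((2*(1-l)*l) * ((τr ω k - τ k) * (τo ω k - τ k))
            + l^2 * (τo ω k - τ k)^2) := by
      intro ω; ring
    simp_rw [hptwise]
    have i1 : Integrable (fun ω => (1-l)^2 * (τr ω k - τ k)^2) μ :=
      (hX2int k).const_mul _
    have i2 : Integrable (fun ω => (2*(1-l)*l) * ((τr ω k - τ k) * (τo ω k - τ k))) μ :=
      (hXYint k).const_mul _
    have i3 : Integrable (fun ω => l^2 * (τo ω k - τ k)^2) μ :=
      (hY2int k).const_mul _
    have i23 : Integrable (fun ω => (2*(1-l)*l) * ((τr ω k - τ k) * (τo ω k - τ k))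
        + l^2 * (τo ω k - τ k)^2) μ := i2.add i3
    rw [integral_add i1 i23, integral_add i2 i3,
      integral_const_mul, integral_const_mul, integral_const_mul,
      hX2mean k, hXYmean k, hY2mean k]
    ring
  have hsqint : ∀ (l : ℝ) (k : Fin K),
      Integrable (fun ω => ((τr ω k - l * (τr ω k - τo ω k)) - τ k)^2) μ := by
    intro l k
    have h : Integrable (fun ω => (1-l)^2 * (τr ω k - τ k)^2
          + ((2*(1-l)*l) * ((τr ω k - τ k) * (τo ω k - τ k))
            + l^2 * (τo ω k - τ k)^2)) μ :=
      ((hX2int k).const_mul _).add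
        (((hXYint k).const_mul _).add ((hY2int k).const_mul _))
    exact h.congr (ae_of_all _ fun ω => by ring)
  have part1 : ∀ l : ℝ, R l
      = (1 - l) ^ 2 * (∑ k, σr k ^ 2 * (d k / K))
        + l ^ 2 * ((∑ k, σo k ^ 2 * (d k / K)) + ∑ k, (d k / K) * ξ k ^ 2) := by
    intro l
    rw [hR l, integral_finset_sum Finset.univ
      (fun k _ => ((hsqint l k).const_mul (d k / K)))]
    simp_rw [integral_const_mul, key l]
    rw [show ∑ k, (d k / (K:ℝ)) * ((1-l)^2 * σr k ^ 2 + l^2 * (σo k ^ 2 + ξ k ^ 2))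
        = ∑ k, ((1-l)^2 * (σr k ^ 2 * (d k / K))
          + (l^2 * (σo k ^ 2 * (d k / K)) + l^2 * ((d k / K) * ξ k ^ 2)))
      from Finset.sum_congr rfl (fun k _ => by ring)]
    rw [Finset.sum_add_distrib, Finset.sum_add_distrib,
      ← Finset.mul_sum, ← Finset.mul_sum, ← Finset.mul_sum]
    ring
  refine ⟨part1, ?_⟩
  intro l hl
  rw [part1 l, part1 lopt]
  haveI : Nonempty (Fin K) := ⟨⟨0, hK⟩⟩
  have hA : 0 < ∑ k, σr k ^ 2 * (d k / (K:ℝ)) := by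
    refine Finset.sum_pos (fun k _ => ?_) Finset.univ_nonempty
    have := hd k; have := hσr k
    positivity
  have hB : 0 ≤ (∑ k, σo k ^ 2 * (d k / (K:ℝ))) + ∑ k, (d k / (K:ℝ)) * ξ k ^ 2 := by
    refine add_nonneg (Finset.sum_nonneg fun k _ => ?_) (Finset.sum_nonneg fun k _ => ?_)
    · have := (hd k).le; positivity
    · have := (hd k).le; positivity
  have hm : lopt = (∑ k, σr k ^ 2 * (d k / (K:ℝ)))
      / ((∑ k, σr k ^ 2 * (d k / (K:ℝ)))
        + ((∑ k, σo k ^ 2 * (d k / (K:ℝ))) + ∑ k, (d k / (K:ℝ)) * ξ k ^ 2)) := by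
    rw [hlopt, add_assoc]
  exact quad_strict_min hA hB hm hl
end

section
/- Assume limsup_{K→∞} (1/K) Σ_k d_k² σ_rk² ξ_k² < ∞, limsup_{K→∞} (1/K) Σ_k d_k² σ_rk² σ_ok² < ∞, and limsup_{K→∞} (1/K) Σ_k d_k² σ_rk⁴ < ∞. Then sup_{0 ≤ λ ≤ 1} |URE_K(λ) − L_K(λ)| → 0 in L² (and hence in probability) as K → ∞, where URE_K(λ) = (1/K)[Σ_k d_k σ_rk² + λ² Σ_k d_k Δ_k² − 2λ Σ_k d_k σ_rk²] and L_K(λ) = (1/K) Σ_k d_k (τ̂_rk − λ(τ̂_rk − τ̂_ok) − τ_k)². -/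
open MeasureTheory ProbabilityTheory Filter Real
open scoped NNReal ENNReal

namespace UREaux

lemma integral_gaussianReal_eq {m : ℝ} {v : ℝ≥0} (hv : v ≠ 0) (g : ℝ → ℝ) :
    ∫ x, g x ∂(gaussianReal m v) = ∫ x, gaussianPDFReal m v x * g x := by
  rw [gaussianReal_of_var_ne_zero _ hv]
  have : gaussianPDF m v = fun x => ((gaussianPDFReal m v x).toNNReal : ℝ≥0∞) := rfl
  rw [this, integral_withDensity_eq_integral_smul
    ((measurable_gaussianPDFReal m v).real_toNNReal) g]
  congr 1 with x
  simp [NNReal.smul_def, Real.coe_toNNReal _ (gaussianPDFReal_nonneg m v x)]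

lemma integrable_gaussianReal_iff {m : ℝ} {v : ℝ≥0} (hv : v ≠ 0) (g : ℝ → ℝ)
    (hg : Measurable g) :
    Integrable g (gaussianReal m v) ↔
      Integrable (fun x => gaussianPDFReal m v x * g x) volume := by
  rw [gaussianReal_of_var_ne_zero _ hv]
  have : gaussianPDF m v = fun x => ((gaussianPDFReal m v x).toNNReal : ℝ≥0∞) := rfl
  rw [this, integrable_withDensity_iff_integrable_smul
    ((measurable_gaussianPDFReal m v).real_toNNReal)]
  have hcong : (fun x => (gaussianPDFReal m v x).toNNReal • g x)
      = fun x => gaussianPDFReal m v x * g x := by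
    ext x
    simp [NNReal.smul_def, Real.coe_toNNReal _ (gaussianPDFReal_nonneg m v x)]
  rw [hcong]

lemma pdf01 : ∀ x : ℝ, gaussianPDFReal 0 1 x = (√(2 * π))⁻¹ * rexp (-(1/2) * x ^ 2) := by
  intro x
  simp only [gaussianPDFReal, NNReal.coe_one, mul_one, sub_zero]
  ring_nf

lemma integrable_pow_mul_pdf (n : ℕ) :
    Integrable (fun x : ℝ => gaussianPDFReal 0 1 x * x ^ n) volume := by
  have h := integrable_rpow_mul_exp_neg_mul_sq (b := 1/2) (by norm_num) (s := n)
    (neg_one_lt_zero.trans_le (Nat.cast_nonneg n))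
  have h2 := h.const_mul (√(2 * π))⁻¹
  refine h2.congr (Eventually.of_forall fun x => ?_)
  simp only [pdf01, Real.rpow_natCast]
  ring

lemma integrable_pow_stdG (n : ℕ) :
    Integrable (fun x : ℝ => x ^ n) (gaussianReal 0 1) := by
  rw [integrable_gaussianReal_iff one_ne_zero _ (measurable_id'.pow_const n)]
  exact integrable_pow_mul_pdf n

lemma integral_id_stdG : ∫ x, x ∂(gaussianReal 0 1) = 0 := by
  rw [integral_gaussianReal_eq one_ne_zero]
  have hderiv : ∀ x : ℝ, HasDerivAt (fun y : ℝ => -(√(2 * π))⁻¹ * rexp (-(1/2) * y ^ 2))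
      (gaussianPDFReal 0 1 x * x) x := by
    intro x
    have h1 : HasDerivAt (fun y : ℝ => -(1/2) * y ^ 2) (-(1/2) * (2 * x ^ 1)) x :=
      (hasDerivAt_pow 2 x).const_mul _
    have h2 := (h1.exp).const_mul (-(√(2 * π))⁻¹)
    refine h2.congr_deriv ?_
    rw [pdf01 x]; ring
  have hint : Integrable (fun x : ℝ => gaussianPDFReal 0 1 x * x) volume := by
    simpa using integrable_pow_mul_pdf 1
  have hF : Integrable (fun y : ℝ => -(√(2 * π))⁻¹ * rexp (-(1/2) * y ^ 2)) volume :=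
    (integrable_exp_neg_mul_sq (by norm_num : (0:ℝ) < 1/2)).const_mul _
  exact MeasureTheory.integral_eq_zero_of_hasDerivAt_of_integrable hderiv hint hF

lemma integral_sq_stdG : ∫ x, x ^ 2 ∂(gaussianReal 0 1) = 1 := by
  have key : ∫ x, gaussianPDFReal 0 1 x * x ^ 2 - gaussianPDFReal 0 1 x = 0 := by
    have hderiv : ∀ x : ℝ, HasDerivAt
        (fun y : ℝ => -(√(2 * π))⁻¹ * (y * rexp (-(1/2) * y ^ 2)))
        (gaussianPDFReal 0 1 x * x ^ 2 - gaussianPDFReal 0 1 x) x := by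
      intro x
      have h1 : HasDerivAt (fun y : ℝ => -(1/2) * y ^ 2) (-(1/2) * (2 * x ^ 1)) x :=
        (hasDerivAt_pow 2 x).const_mul _
      have h2 : HasDerivAt (fun y : ℝ => y * rexp (-(1/2) * y ^ 2))
          (1 * rexp (-(1/2) * x ^ 2) + x * (rexp (-(1/2) * x ^ 2) * (-(1/2) * (2 * x ^ 1)))) x :=
        (hasDerivAt_id x).mul h1.exp
      have h3 := h2.const_mul (-(√(2 * π))⁻¹)
      refine h3.congr_deriv ?_
      rw [pdf01 x]; ring
    have hint : Integrable
        (fun x : ℝ => gaussianPDFReal 0 1 x * x ^ 2 - gaussianPDFReal 0 1 x) volume :=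
      (integrable_pow_mul_pdf 2).sub (integrable_gaussianPDFReal 0 1)
    have hF : Integrable (fun y : ℝ => -(√(2 * π))⁻¹ * (y * rexp (-(1/2) * y ^ 2))) volume :=
      (integrable_mul_exp_neg_mul_sq (by norm_num : (0:ℝ) < 1/2)).const_mul (-(√(2 * π))⁻¹)
    exact MeasureTheory.integral_eq_zero_of_hasDerivAt_of_integrable hderiv hint hF
  rw [integral_sub (integrable_pow_mul_pdf 2) (integrable_gaussianPDFReal 0 1)] at key
  rw [integral_gaussianReal_eq one_ne_zero]
  have h1 := integral_gaussianPDFReal_eq_one 0 one_ne_zero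
  linarith

end UREaux

namespace UREaux
open scoped NNReal
open MeasureTheory ProbabilityTheory Filter Real

noncomputable def gM (n : ℕ) : ℝ := ∫ x, x ^ n ∂(gaussianReal 0 1)

lemma gM_one : gM 1 = 0 := by simpa [gM] using integral_id_stdG
lemma gM_two : gM 2 = 1 := integral_sq_stdG

lemma gauss_scale (σ : ℝ) :
    gaussianReal 0 ⟨σ ^ 2, sq_nonneg _⟩ = (gaussianReal 0 1).map (σ * ·) := by
  rw [gaussianReal_map_const_mul]
  congr 1
  · ring
  · ext : 1
    simp; rfl

lemma integral_pow_gauss (σ : ℝ) (n : ℕ) :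
    ∫ x, x ^ n ∂(gaussianReal 0 ⟨σ ^ 2, sq_nonneg _⟩) = σ ^ n * gM n := by
  rw [gauss_scale σ, integral_map (by fun_prop) (by fun_prop)]
  simp_rw [mul_pow]
  rw [integral_const_mul]
  rfl

lemma integrable_pow_gauss (σ : ℝ) (n : ℕ) :
    Integrable (fun x => x ^ n) (gaussianReal 0 ⟨σ ^ 2, sq_nonneg _⟩) := by
  rw [gauss_scale σ, integrable_map_measure (by fun_prop) (by fun_prop)]
  have := (integrable_pow_stdG n).const_mul (σ ^ n)
  refine this.congr (Eventually.of_forall fun x => ?_)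
  simp [Function.comp, mul_pow]

lemma rv_pow_integrable {Ω : Type*} [MeasurableSpace Ω] (μ : Measure Ω) {X : Ω → ℝ}
    (hX : Measurable X) {σ : ℝ} (h : μ.map X = gaussianReal 0 ⟨σ ^ 2, sq_nonneg _⟩)
    (n : ℕ) : Integrable (fun ω => X ω ^ n) μ := by
  have h2 : Integrable (fun x => x ^ n) (μ.map X) := h ▸ integrable_pow_gauss σ n
  rw [integrable_map_measure (by fun_prop) hX.aemeasurable] at h2
  exact h2

lemma rv_pow_integral {Ω : Type*} [MeasurableSpace Ω] (μ : Measure Ω) {X : Ω → ℝ}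
    (hX : Measurable X) {σ : ℝ} (h : μ.map X = gaussianReal 0 ⟨σ ^ 2, sq_nonneg _⟩)
    (n : ℕ) : ∫ ω, X ω ^ n ∂μ = σ ^ n * gM n := by
  rw [← integral_pow_gauss σ n, ← h, integral_map hX.aemeasurable (by fun_prop)]

end UREaux

namespace UREaux
open MeasureTheory ProbabilityTheory Filter Real
open scoped NNReal

lemma sum_sq_integral {Ω : Type*} [MeasurableSpace Ω] (μ : Measure Ω) {K : ℕ}
    (Y : Fin K → Ω → ℝ)
    (hint : ∀ k j, Integrable (fun ω => Y k ω * Y j ω) μ)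
    (hzero : ∀ k j, k ≠ j → ∫ ω, Y k ω * Y j ω ∂μ = 0) :
    Integrable (fun ω => (∑ k, Y k ω) ^ 2) μ ∧
      ∫ ω, (∑ k, Y k ω) ^ 2 ∂μ = ∑ k, ∫ ω, Y k ω * Y k ω ∂μ := by
  have hfun : ∀ ω : Ω, (∑ k, Y k ω) ^ 2 = ∑ k, ∑ j, Y k ω * Y j ω := by
    intro ω; rw [sq, Finset.sum_mul_sum]
  have hint2 : Integrable (fun ω => ∑ k, ∑ j, Y k ω * Y j ω) μ :=
    integrable_finset_sum _ fun k _ => integrable_finset_sum _ fun j _ => hint k j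
  constructor
  · exact hint2.congr (Eventually.of_forall fun ω => (hfun ω).symm)
  · simp_rw [hfun]
    rw [integral_finset_sum _ fun k _ => integrable_finset_sum _ fun j _ => hint k j]
    refine Finset.sum_congr rfl fun k _ => ?_
    rw [integral_finset_sum _ fun j _ => hint k j]
    exact Finset.sum_eq_single k (fun j _ hj => hzero k j (Ne.symm hj))
      (fun h => absurd (Finset.mem_univ k) h)

lemma sum_expand {K : ℕ} (d rr oo tt : Fin K → ℝ) (l : ℝ) :
    ∑ k, d k * ((rr k - l * (rr k - oo k)) - tt k) ^ 2
      = (∑ k, d k * (rr k - tt k) ^ 2) + l ^ 2 * (∑ k, d k * (oo k - rr k) ^ 2)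
        - 2 * l * ((∑ k, d k * (rr k - tt k) ^ 2)
          - ∑ k, d k * ((rr k - tt k) * (oo k - tt k))) := by
  calc ∑ k, d k * ((rr k - l * (rr k - oo k)) - tt k) ^ 2
      = ∑ k, (d k * (rr k - tt k) ^ 2 + l ^ 2 * (d k * (oo k - rr k) ^ 2)
          - 2 * l * (d k * (rr k - tt k) ^ 2 - d k * ((rr k - tt k) * (oo k - tt k)))) :=
        Finset.sum_congr rfl fun k _ => by ring
    _ = _ := by
        rw [Finset.sum_sub_distrib, Finset.sum_add_distrib, ← Finset.mul_sum, ← Finset.mul_sum,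
          ← Finset.sum_sub_distrib]

end UREaux


namespace UREaux
open MeasureTheory ProbabilityTheory Filter Real
open scoped NNReal

lemma expr_eq {K : ℕ} (d σr τv : Fin K → ℝ) (r o : Fin K → ℝ) (l : ℝ) :
    (1 / (K : ℝ)) * ((∑ k, d k * σr k ^ 2) + l ^ 2 * ∑ k, d k * (o k - r k) ^ 2
        - 2 * l * ∑ k, d k * σr k ^ 2)
      - (1 / (K : ℝ)) * ∑ k, d k * ((r k - l * (r k - o k)) - τv k) ^ 2
    = ((1 / (K : ℝ)) * ∑ k, d k * (σr k ^ 2 - (r k - τv k) ^ 2))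
      + l * (-2 * ((1 / (K : ℝ)) * ∑ k, d k * (σr k ^ 2 - (r k - τv k) ^ 2))
        - 2 * ((1 / (K : ℝ)) * ∑ k, d k * ((r k - τv k) * (o k - τv k)))) := by
  rw [sum_expand d r o τv l]
  have h1 : ∑ k, d k * (σr k ^ 2 - (r k - τv k) ^ 2)
      = (∑ k, d k * σr k ^ 2) - ∑ k, d k * (r k - τv k) ^ 2 := by
    rw [← Finset.sum_sub_distrib]
    exact Finset.sum_congr rfl fun k _ => by ring
  rw [h1]; ring

lemma sup_eq_max {A B : ℝ} {f : Set.Icc (0:ℝ) 1 → ℝ}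
    (hf : ∀ l : Set.Icc (0:ℝ) 1, f l = |A + (l : ℝ) * B|) :
    (⨆ l, f l) = max |A| |A + B| := by
  haveI : Nonempty (Set.Icc (0:ℝ) 1) := ⟨⟨0, le_refl 0, zero_le_one⟩⟩
  have hub : ∀ l : Set.Icc (0:ℝ) 1, f l ≤ max |A| |A + B| := by
    rintro ⟨l, hl0, hl1⟩
    rw [hf ⟨l, hl0, hl1⟩]
    have key : A + l * B = (1 - l) * A + l * (A + B) := by ring
    rw [key]
    calc |(1 - l) * A + l * (A + B)| ≤ |(1 - l) * A| + |l * (A + B)| := abs_add_le _ _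
      _ = (1 - l) * |A| + l * |A + B| := by
          rw [abs_mul, abs_mul, abs_of_nonneg (by linarith : (0:ℝ) ≤ 1 - l),
            abs_of_nonneg hl0]
      _ ≤ (1 - l) * max |A| |A + B| + l * max |A| |A + B| :=
          add_le_add (mul_le_mul_of_nonneg_left (le_max_left _ _) (by linarith))
            (mul_le_mul_of_nonneg_left (le_max_right _ _) hl0)
      _ = max |A| |A + B| := by ring
  have hbdd : BddAbove (Set.range f) := ⟨max |A| |A + B|, by rintro y ⟨l, rfl⟩; exact hub l⟩
  refine le_antisymm (ciSup_le hub) (max_le ?_ ?_)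
  · have h0 := le_ciSup hbdd (⟨0, le_refl 0, zero_le_one⟩ : Set.Icc (0:ℝ) 1)
    rw [hf] at h0
    simpa using h0
  · have h1 := le_ciSup hbdd (⟨1, zero_le_one, le_refl 1⟩ : Set.Icc (0:ℝ) 1)
    rw [hf] at h1
    simpa using h1

lemma max_sq_bound (a c : ℝ) :
    (max |a| |a + (-2 * a - 2 * c)|) ^ 2 ≤ 3 * a ^ 2 + 8 * c ^ 2 := by
  rcases max_cases |a| |a + (-2 * a - 2 * c)| with ⟨h, _⟩ | ⟨h, _⟩ <;> rw [h, sq_abs] <;>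
    nlinarith [sq_nonneg c, sq_nonneg (a - c), sq_nonneg (a + 2 * c), sq_nonneg a]

lemma keybound
    {Ω : Type*} [MeasurableSpace Ω] {μ : Measure Ω} [IsProbabilityMeasure μ]
    {K : ℕ} (d σr σo ξ τv : Fin K → ℝ) (τr τo : Ω → Fin K → ℝ)
    (hτr_meas : ∀ k, Measurable fun ω => τr ω k)
    (hτo_meas : ∀ k, Measurable fun ω => τo ω k)
    (hτr_gauss : ∀ k, μ.map (fun ω => τr ω k) = gaussianReal (τv k) ⟨σr k ^ 2, sq_nonneg _⟩)
    (hτr_indep : iIndepFun (fun k ω => τr ω k) μ)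
    (hτo_indep : iIndepFun (fun k ω => τo ω k) μ)
    (hro_indep : IndepFun (fun ω => τr ω) (fun ω => τo ω) μ)
    (hτo_mem : ∀ k, MemLp (fun ω => τo ω k) 2 μ)
    (hτo_mean : ∀ k, ∫ ω, τo ω k ∂μ = τv k + ξ k)
    (hτo_var : ∀ k, variance (fun ω => τo ω k) μ = σo k ^ 2) :
    ∃ S : Ω → ℝ,
      (∀ ω, S ω = ⨆ l : Set.Icc (0:ℝ) 1,
        |(1 / (K : ℝ)) * ((∑ k, d k * σr k ^ 2)
            + (l : ℝ) ^ 2 * ∑ k, d k * (τo ω k - τr ω k) ^ 2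
            - 2 * (l : ℝ) * ∑ k, d k * σr k ^ 2)
          - (1 / (K : ℝ)) * ∑ k, d k
              * ((τr ω k - (l : ℝ) * (τr ω k - τo ω k)) - τv k) ^ 2|) ∧
      (∀ ω, 0 ≤ S ω) ∧
      Integrable (fun ω => S ω ^ 2) μ ∧
      ∫ ω, S ω ^ 2 ∂μ ≤
        3 * ((gM 4 - 1) * ((1 / (K : ℝ)) ^ 2 * ∑ k, d k ^ 2 * σr k ^ 4))
          + 8 * ((1 / (K : ℝ)) ^ 2 * ∑ k, d k ^ 2 * (σr k ^ 2 * (σo k ^ 2 + ξ k ^ 2))) := by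
  -- abbreviations
  have hx_meas : ∀ k, Measurable fun ω => τr ω k - τv k :=
    fun k => (hτr_meas k).sub measurable_const
  have hb_meas : ∀ k, Measurable fun ω => τo ω k - τv k :=
    fun k => (hτo_meas k).sub measurable_const
  have hx_gauss : ∀ k, μ.map (fun ω => τr ω k - τv k)
      = gaussianReal 0 ⟨σr k ^ 2, sq_nonneg _⟩ := by
    intro k
    have h1 : (fun ω => τr ω k - τv k) = (· + (-(τv k))) ∘ (fun ω => τr ω k) := by
      funext ω; simp [sub_eq_add_neg]
    rw [h1, ← Measure.map_map (measurable_add_const _) (hτr_meas k), hτr_gauss k]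
    refine (gaussianReal_map_add_const (-(τv k))).trans ?_
    norm_num
  have hx_int : ∀ k (n : ℕ), Integrable (fun ω => (τr ω k - τv k) ^ n) μ :=
    fun k n => rv_pow_integrable μ (hx_meas k) (hx_gauss k) n
  have hx_m1 : ∀ k, ∫ ω, τr ω k - τv k ∂μ = 0 := by
    intro k
    have h := rv_pow_integral μ (hx_meas k) (hx_gauss k) 1
    simpa [gM_one] using h
  have hx_m2 : ∀ k, ∫ ω, (τr ω k - τv k) ^ 2 ∂μ = σr k ^ 2 := by
    intro k
    rw [rv_pow_integral μ (hx_meas k) (hx_gauss k) 2, gM_two, mul_one]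
  have hx_m4 : ∀ k, ∫ ω, (τr ω k - τv k) ^ 4 ∂μ = σr k ^ 4 * gM 4 :=
    fun k => rv_pow_integral μ (hx_meas k) (hx_gauss k) 4
  -- b facts
  have hb_mem : ∀ k, MemLp (fun ω => τo ω k - τv k) 2 μ :=
    fun k => (hτo_mem k).sub (memLp_const (τv k))
  have hτo_int : ∀ k, Integrable (fun ω => τo ω k) μ :=
    fun k => (hτo_mem k).integrable one_le_two
  have hb_int : ∀ k, Integrable (fun ω => τo ω k - τv k) μ :=
    fun k => (hτo_int k).sub (integrable_const _)
  have hτo_sq_int : ∀ k, Integrable (fun ω => τo ω k ^ 2) μ := by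
    intro k
    have h := (hτo_mem k).integrable_sq
    simpa using h
  have hb_sq_int : ∀ k, Integrable (fun ω => (τo ω k - τv k) ^ 2) μ := by
    intro k
    have h := (hb_mem k).integrable_sq
    simpa using h
  have hb_m1 : ∀ k, ∫ ω, τo ω k - τv k ∂μ = ξ k := by
    intro k
    rw [integral_sub (hτo_int k) (integrable_const _), hτo_mean k, integral_const]
    simp
  have hb_m2 : ∀ k, ∫ ω, (τo ω k - τv k) ^ 2 ∂μ = σo k ^ 2 + ξ k ^ 2 := by
    intro k
    have hv := variance_eq_sub (hτo_mem k)
    rw [hτo_var k] at hv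
    have hv2 : σo k ^ 2 = (∫ ω, τo ω k ^ 2 ∂μ) - (τv k + ξ k) ^ 2 := by
      rw [← hτo_mean k]
      simpa [Pi.pow_apply] using hv
    have hexp : ∀ ω : Ω, (τo ω k - τv k) ^ 2
        = τo ω k ^ 2 - 2 * τv k * τo ω k + τv k ^ 2 := fun ω => by ring
    calc ∫ ω, (τo ω k - τv k) ^ 2 ∂μ
        = ∫ ω, (τo ω k ^ 2 - 2 * τv k * τo ω k + τv k ^ 2) ∂μ := by simp_rw [hexp]
      _ = (∫ ω, τo ω k ^ 2 ∂μ) - (∫ ω, 2 * τv k * τo ω k ∂μ) + ∫ _, τv k ^ 2 ∂μ := by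
          rw [integral_add (by exact (hτo_sq_int k).sub ((hτo_int k).const_mul _))
              (integrable_const _),
            integral_sub (hτo_sq_int k) (by exact (hτo_int k).const_mul _)]
      _ = σo k ^ 2 + ξ k ^ 2 := by
          rw [integral_const_mul, hτo_mean k, integral_const]
          simp only [measure_univ, ENNReal.toReal_one, smul_eq_mul, one_mul, probReal_univ]
          nlinarith [hv2]
  have hx_int1 : ∀ k, Integrable (fun ω => τr ω k - τv k) μ := by
    intro k; have h := hx_int k 1; simpa using h
  -- A part: Y_k = d_k (σ² - x²)
  have hYA_indep : ∀ k j : Fin K, k ≠ j →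
      IndepFun (fun ω => d k * (σr k ^ 2 - (τr ω k - τv k) ^ 2))
        (fun ω => d j * (σr j ^ 2 - (τr ω j - τv j) ^ 2)) μ := by
    intro k j hkj
    exact (hτr_indep.indepFun hkj).comp
      (φ := fun t => d k * (σr k ^ 2 - (t - τv k) ^ 2))
      (ψ := fun t => d j * (σr j ^ 2 - (t - τv j) ^ 2))
      (by fun_prop) (by fun_prop)
  have hYA_int1 : ∀ k, Integrable (fun ω => d k * (σr k ^ 2 - (τr ω k - τv k) ^ 2)) μ :=
    fun k => by exact ((integrable_const _).sub (hx_int k 2)).const_mul _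
  have hYA_m1 : ∀ k, ∫ ω, d k * (σr k ^ 2 - (τr ω k - τv k) ^ 2) ∂μ = 0 := by
    intro k
    rw [integral_const_mul, integral_sub (integrable_const _) (hx_int k 2), hx_m2,
      integral_const]
    simp
  have hintA : ∀ k j : Fin K, Integrable (fun ω =>
      (d k * (σr k ^ 2 - (τr ω k - τv k) ^ 2))
        * (d j * (σr j ^ 2 - (τr ω j - τv j) ^ 2))) μ := by
    intro k j
    by_cases hkj : k = j
    · subst hkj
      refine ((((integrable_const (d k ^ 2 * σr k ^ 4)).sub
          ((hx_int k 2).const_mul (2 * d k ^ 2 * σr k ^ 2))).add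
          ((hx_int k 4).const_mul (d k ^ 2))).congr (Eventually.of_forall fun ω => ?_))
      simp only [Pi.add_apply, Pi.sub_apply]
      ring
    · exact ((hYA_indep k j hkj).integrable_mul (hYA_int1 k) (hYA_int1 j)).congr
        (Eventually.of_forall fun ω => rfl)
  have hzeroA : ∀ k j : Fin K, k ≠ j → ∫ ω,
      (d k * (σr k ^ 2 - (τr ω k - τv k) ^ 2))
        * (d j * (σr j ^ 2 - (τr ω j - τv j) ^ 2)) ∂μ = 0 := by
    intro k j hkj
    have h : ∫ ω, (d k * (σr k ^ 2 - (τr ω k - τv k) ^ 2))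
        * (d j * (σr j ^ 2 - (τr ω j - τv j) ^ 2)) ∂μ
        = (∫ ω, d k * (σr k ^ 2 - (τr ω k - τv k) ^ 2) ∂μ)
          * ∫ ω, d j * (σr j ^ 2 - (τr ω j - τv j) ^ 2) ∂μ :=
      (hYA_indep k j hkj).integral_fun_mul_eq_mul_integral (hYA_int1 k).aestronglyMeasurable (hYA_int1 j).aestronglyMeasurable
    rw [h, hYA_m1 k, hYA_m1 j, mul_zero]
  obtain ⟨hAint, hAval⟩ := sum_sq_integral μ
    (fun k ω => d k * (σr k ^ 2 - (τr ω k - τv k) ^ 2)) hintA hzeroA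
  have hAdiag : ∀ k : Fin K, ∫ ω,
      (d k * (σr k ^ 2 - (τr ω k - τv k) ^ 2))
        * (d k * (σr k ^ 2 - (τr ω k - τv k) ^ 2)) ∂μ
      = d k ^ 2 * (σr k ^ 4 * (gM 4 - 1)) := by
    intro k
    have hexp : ∀ ω : Ω, (d k * (σr k ^ 2 - (τr ω k - τv k) ^ 2))
        * (d k * (σr k ^ 2 - (τr ω k - τv k) ^ 2))
        = d k ^ 2 * σr k ^ 4 - (2 * d k ^ 2 * σr k ^ 2) * (τr ω k - τv k) ^ 2
          + d k ^ 2 * (τr ω k - τv k) ^ 4 := fun ω => by ring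
    calc ∫ ω, (d k * (σr k ^ 2 - (τr ω k - τv k) ^ 2))
          * (d k * (σr k ^ 2 - (τr ω k - τv k) ^ 2)) ∂μ
        = ∫ ω, (d k ^ 2 * σr k ^ 4 - (2 * d k ^ 2 * σr k ^ 2) * (τr ω k - τv k) ^ 2
            + d k ^ 2 * (τr ω k - τv k) ^ 4) ∂μ := by simp_rw [hexp]
      _ = ((∫ _, d k ^ 2 * σr k ^ 4 ∂μ)
            - ∫ ω, (2 * d k ^ 2 * σr k ^ 2) * (τr ω k - τv k) ^ 2 ∂μ)
            + ∫ ω, d k ^ 2 * (τr ω k - τv k) ^ 4 ∂μ := by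
          rw [integral_add (by exact (integrable_const _).sub ((hx_int k 2).const_mul _))
              (by exact (hx_int k 4).const_mul _),
            integral_sub (integrable_const _) (by exact (hx_int k 2).const_mul _)]
      _ = d k ^ 2 * (σr k ^ 4 * (gM 4 - 1)) := by
          simp only [integral_const_mul]
          rw [hx_m2, hx_m4, integral_const]
          simp only [measure_univ, ENNReal.toReal_one, smul_eq_mul, one_mul, probReal_univ]
          ring
  rw [Finset.sum_congr rfl (fun k _ => hAdiag k)] at hAval
  -- C part: Y_k = d_k x_k b_k
  have hxb_indep : ∀ k : Fin K, IndepFun (fun ω => (τr ω k - τv k) ^ 2)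
      (fun ω => (τo ω k - τv k) ^ 2) μ := by
    intro k
    exact hro_indep.comp (φ := fun t => (t k - τv k) ^ 2) (ψ := fun t => (t k - τv k) ^ 2)
      (by fun_prop) (by fun_prop)
  have hCdiag_int : ∀ k : Fin K, Integrable
      (fun ω => (τr ω k - τv k) ^ 2 * (τo ω k - τv k) ^ 2) μ := by
    intro k
    exact ((hxb_indep k).integrable_mul (hx_int k 2) (hb_sq_int k)).congr
      (Eventually.of_forall fun ω => rfl)
  have hCdiag_val : ∀ k : Fin K, ∫ ω, (τr ω k - τv k) ^ 2 * (τo ω k - τv k) ^ 2 ∂μ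
      = σr k ^ 2 * (σo k ^ 2 + ξ k ^ 2) := by
    intro k
    have h : ∫ ω, (τr ω k - τv k) ^ 2 * (τo ω k - τv k) ^ 2 ∂μ
        = (∫ ω, (τr ω k - τv k) ^ 2 ∂μ) * ∫ ω, (τo ω k - τv k) ^ 2 ∂μ :=
      (hxb_indep k).integral_fun_mul_eq_mul_integral (hx_int k 2).aestronglyMeasurable (hb_sq_int k).aestronglyMeasurable
    rw [h, hx_m2, hb_m2]
  have hu_indep : ∀ k j : Fin K, k ≠ j → IndepFun
      (fun ω => (τr ω k - τv k) * (τr ω j - τv j))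
      (fun ω => (τo ω k - τv k) * (τo ω j - τv j)) μ := by
    intro k j _
    exact hro_indep.comp (φ := fun t => (t k - τv k) * (t j - τv j))
      (ψ := fun t => (t k - τv k) * (t j - τv j)) (by fun_prop) (by fun_prop)
  have hxx_indep : ∀ k j : Fin K, k ≠ j → IndepFun (fun ω => τr ω k - τv k)
      (fun ω => τr ω j - τv j) μ := by
    intro k j hkj
    exact (hτr_indep.indepFun hkj).comp (φ := fun t => t - τv k) (ψ := fun t => t - τv j)
      (by fun_prop) (by fun_prop)
  have hbb_indep : ∀ k j : Fin K, k ≠ j → IndepFun (fun ω => τo ω k - τv k)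
      (fun ω => τo ω j - τv j) μ := by
    intro k j hkj
    exact (hτo_indep.indepFun hkj).comp (φ := fun t => t - τv k) (ψ := fun t => t - τv j)
      (by fun_prop) (by fun_prop)
  have hu_int : ∀ k j : Fin K, k ≠ j → Integrable
      (fun ω => (τr ω k - τv k) * (τr ω j - τv j)) μ := by
    intro k j hkj
    exact ((hxx_indep k j hkj).integrable_mul (hx_int1 k) (hx_int1 j)).congr
      (Eventually.of_forall fun ω => rfl)
  have hu_val : ∀ k j : Fin K, k ≠ j →
      ∫ ω, (τr ω k - τv k) * (τr ω j - τv j) ∂μ = 0 := by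
    intro k j hkj
    have h : ∫ ω, (τr ω k - τv k) * (τr ω j - τv j) ∂μ
        = (∫ ω, τr ω k - τv k ∂μ) * ∫ ω, τr ω j - τv j ∂μ :=
      (hxx_indep k j hkj).integral_fun_mul_eq_mul_integral (hx_int1 k).aestronglyMeasurable (hx_int1 j).aestronglyMeasurable
    rw [h, hx_m1 k, zero_mul]
  have hv_int : ∀ k j : Fin K, k ≠ j → Integrable
      (fun ω => (τo ω k - τv k) * (τo ω j - τv j)) μ := by
    intro k j hkj
    exact ((hbb_indep k j hkj).integrable_mul (hb_int k) (hb_int j)).congr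
      (Eventually.of_forall fun ω => rfl)
  have hintC : ∀ k j : Fin K, Integrable (fun ω =>
      (d k * ((τr ω k - τv k) * (τo ω k - τv k)))
        * (d j * ((τr ω j - τv j) * (τo ω j - τv j)))) μ := by
    intro k j
    by_cases hkj : k = j
    · subst hkj
      refine ((hCdiag_int k).const_mul (d k ^ 2)).congr (Eventually.of_forall fun ω => ?_)
      ring
    · refine (((hu_indep k j hkj).integrable_mul (hu_int k j hkj)
        (hv_int k j hkj)).const_mul (d k * d j)).congr (Eventually.of_forall fun ω => ?_)
      simp only [Pi.mul_apply]
      ring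
  have hzeroC : ∀ k j : Fin K, k ≠ j → ∫ ω,
      (d k * ((τr ω k - τv k) * (τo ω k - τv k)))
        * (d j * ((τr ω j - τv j) * (τo ω j - τv j))) ∂μ = 0 := by
    intro k j hkj
    have h1 : ∫ ω, (d k * ((τr ω k - τv k) * (τo ω k - τv k)))
        * (d j * ((τr ω j - τv j) * (τo ω j - τv j))) ∂μ
        = (d k * d j) * ∫ ω, ((τr ω k - τv k) * (τr ω j - τv j))
            * ((τo ω k - τv k) * (τo ω j - τv j)) ∂μ := by
      rw [← integral_const_mul]
      exact integral_congr_ae (Eventually.of_forall fun ω => by ring)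
    have h2 : ∫ ω, ((τr ω k - τv k) * (τr ω j - τv j))
        * ((τo ω k - τv k) * (τo ω j - τv j)) ∂μ
        = (∫ ω, (τr ω k - τv k) * (τr ω j - τv j) ∂μ)
          * ∫ ω, (τo ω k - τv k) * (τo ω j - τv j) ∂μ :=
      (hu_indep k j hkj).integral_fun_mul_eq_mul_integral (hu_int k j hkj).aestronglyMeasurable (hv_int k j hkj).aestronglyMeasurable
    rw [h1, h2, hu_val k j hkj, zero_mul, mul_zero]
  obtain ⟨hCint, hCval⟩ := sum_sq_integral μ
    (fun k ω => d k * ((τr ω k - τv k) * (τo ω k - τv k))) hintC hzeroC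
  have hCdiag : ∀ k : Fin K, ∫ ω,
      (d k * ((τr ω k - τv k) * (τo ω k - τv k)))
        * (d k * ((τr ω k - τv k) * (τo ω k - τv k))) ∂μ
      = d k ^ 2 * (σr k ^ 2 * (σo k ^ 2 + ξ k ^ 2)) := by
    intro k
    have h1 : ∫ ω, (d k * ((τr ω k - τv k) * (τo ω k - τv k)))
        * (d k * ((τr ω k - τv k) * (τo ω k - τv k))) ∂μ
        = d k ^ 2 * ∫ ω, (τr ω k - τv k) ^ 2 * (τo ω k - τv k) ^ 2 ∂μ := by
      rw [← integral_const_mul]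
      exact integral_congr_ae (Eventually.of_forall fun ω => by ring)
    rw [h1, hCdiag_val k]
  rw [Finset.sum_congr rfl (fun k _ => hCdiag k)] at hCval
  -- integrability & bounds for A,C squares
  have hAA : Integrable (fun ω =>
      ((1/(K:ℝ)) * ∑ k, d k * (σr k ^ 2 - (τr ω k - τv k) ^ 2)) ^ 2) μ := by
    refine (hAint.const_mul ((1/(K:ℝ)) ^ 2)).congr (Eventually.of_forall fun ω => ?_)
    ring
  have hCC : Integrable (fun ω =>
      ((1/(K:ℝ)) * ∑ k, d k * ((τr ω k - τv k) * (τo ω k - τv k))) ^ 2) μ := by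
    refine (hCint.const_mul ((1/(K:ℝ)) ^ 2)).congr (Eventually.of_forall fun ω => ?_)
    ring
  have hdom : Integrable (fun ω =>
      3 * ((1/(K:ℝ)) * ∑ k, d k * (σr k ^ 2 - (τr ω k - τv k) ^ 2)) ^ 2
        + 8 * ((1/(K:ℝ)) * ∑ k, d k * ((τr ω k - τv k) * (τo ω k - τv k))) ^ 2) μ :=
    ((hAA.const_mul 3).add (hCC.const_mul 8)).congr (Eventually.of_forall fun ω => rfl)
  have hAmeas : Measurable (fun ω =>
      (1/(K:ℝ)) * ∑ k, d k * (σr k ^ 2 - (τr ω k - τv k) ^ 2)) := by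
    apply Measurable.const_mul
    apply Finset.measurable_sum
    intro k _
    exact ((((hτr_meas k).sub measurable_const).pow_const 2).const_sub _).const_mul _
  have hCmeas : Measurable (fun ω =>
      (1/(K:ℝ)) * ∑ k, d k * ((τr ω k - τv k) * (τo ω k - τv k))) := by
    apply Measurable.const_mul
    apply Finset.measurable_sum
    intro k _
    exact (((hτr_meas k).sub measurable_const).mul
      ((hτo_meas k).sub measurable_const)).const_mul _
  have hGmeas : Measurable (fun ω =>
      max |(1/(K:ℝ)) * ∑ k, d k * (σr k ^ 2 - (τr ω k - τv k) ^ 2)|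
        |((1/(K:ℝ)) * ∑ k, d k * (σr k ^ 2 - (τr ω k - τv k) ^ 2)) +
          (-2 * ((1/(K:ℝ)) * ∑ k, d k * (σr k ^ 2 - (τr ω k - τv k) ^ 2))
            - 2 * ((1/(K:ℝ)) * ∑ k, d k * ((τr ω k - τv k) * (τo ω k - τv k))))|) :=
    (hAmeas.abs).max
      ((hAmeas.add ((hAmeas.const_mul (-2)).sub (hCmeas.const_mul 2))).abs)
  have hGint : Integrable (fun ω =>
      (max |(1/(K:ℝ)) * ∑ k, d k * (σr k ^ 2 - (τr ω k - τv k) ^ 2)|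
        |((1/(K:ℝ)) * ∑ k, d k * (σr k ^ 2 - (τr ω k - τv k) ^ 2)) +
          (-2 * ((1/(K:ℝ)) * ∑ k, d k * (σr k ^ 2 - (τr ω k - τv k) ^ 2))
            - 2 * ((1/(K:ℝ)) * ∑ k, d k * ((τr ω k - τv k) * (τo ω k - τv k))))|) ^ 2) μ := by
    refine Integrable.mono' hdom ((hGmeas.pow_const 2).aestronglyMeasurable)
      (Eventually.of_forall fun ω => ?_)
    rw [Real.norm_eq_abs, abs_of_nonneg (sq_nonneg _)]
    exact max_sq_bound _ _
  have hA2val : ∫ ω, ((1/(K:ℝ)) * ∑ k, d k * (σr k ^ 2 - (τr ω k - τv k) ^ 2)) ^ 2 ∂μ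
      = (1/(K:ℝ)) ^ 2 * ∑ k, d k ^ 2 * (σr k ^ 4 * (gM 4 - 1)) := by
    simp_rw [mul_pow]
    rw [integral_const_mul, hAval]
  have hC2val : ∫ ω, ((1/(K:ℝ)) * ∑ k, d k * ((τr ω k - τv k) * (τo ω k - τv k))) ^ 2 ∂μ
      = (1/(K:ℝ)) ^ 2 * ∑ k, d k ^ 2 * (σr k ^ 2 * (σo k ^ 2 + ξ k ^ 2)) := by
    simp_rw [mul_pow]
    rw [integral_const_mul, hCval]
  have hIval : ∫ ω, (max |(1/(K:ℝ)) * ∑ k, d k * (σr k ^ 2 - (τr ω k - τv k) ^ 2)|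
        |((1/(K:ℝ)) * ∑ k, d k * (σr k ^ 2 - (τr ω k - τv k) ^ 2)) +
          (-2 * ((1/(K:ℝ)) * ∑ k, d k * (σr k ^ 2 - (τr ω k - τv k) ^ 2))
            - 2 * ((1/(K:ℝ)) * ∑ k, d k * ((τr ω k - τv k) * (τo ω k - τv k))))|) ^ 2 ∂μ
      ≤ 3 * ((gM 4 - 1) * ((1 / (K : ℝ)) ^ 2 * ∑ k, d k ^ 2 * σr k ^ 4))
          + 8 * ((1 / (K : ℝ)) ^ 2 * ∑ k, d k ^ 2 * (σr k ^ 2 * (σo k ^ 2 + ξ k ^ 2))) := by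
    have step1 := integral_mono hGint hdom (fun ω => max_sq_bound _ _)
    have step2 : ∫ ω, (3 * ((1/(K:ℝ)) * ∑ k, d k * (σr k ^ 2 - (τr ω k - τv k) ^ 2)) ^ 2
        + 8 * ((1/(K:ℝ)) * ∑ k, d k * ((τr ω k - τv k) * (τo ω k - τv k))) ^ 2) ∂μ
        = 3 * ((1/(K:ℝ)) ^ 2 * ∑ k, d k ^ 2 * (σr k ^ 4 * (gM 4 - 1)))
          + 8 * ((1/(K:ℝ)) ^ 2 * ∑ k, d k ^ 2 * (σr k ^ 2 * (σo k ^ 2 + ξ k ^ 2))) := by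
      rw [integral_add (by exact hAA.const_mul 3) (by exact hCC.const_mul 8),
        integral_const_mul, integral_const_mul, hA2val, hC2val]
    have hsumA : ∑ k, d k ^ 2 * (σr k ^ 4 * (gM 4 - 1))
        = (∑ k, d k ^ 2 * σr k ^ 4) * (gM 4 - 1) := by
      rw [Finset.sum_mul]
      exact Finset.sum_congr rfl fun k _ => by ring
    rw [step2, hsumA] at step1
    calc _ ≤ _ := step1
      _ = _ := by ring
  -- final assembly
  refine ⟨fun ω => max |(1/(K:ℝ)) * ∑ k, d k * (σr k ^ 2 - (τr ω k - τv k) ^ 2)|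
      |((1/(K:ℝ)) * ∑ k, d k * (σr k ^ 2 - (τr ω k - τv k) ^ 2)) +
        (-2 * ((1/(K:ℝ)) * ∑ k, d k * (σr k ^ 2 - (τr ω k - τv k) ^ 2))
          - 2 * ((1/(K:ℝ)) * ∑ k, d k * ((τr ω k - τv k) * (τo ω k - τv k))))|,
    ?_, ?_, ?_, ?_⟩
  · intro ω
    exact (sup_eq_max (fun l => congrArg abs (expr_eq d σr τv (τr ω) (τo ω) (l : ℝ)))).symm
  · exact fun ω => le_trans (abs_nonneg _) (le_max_left _ _)
  · exact hGint
  · exact hIval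


end UREaux

namespace UREaux
open MeasureTheory ProbabilityTheory Filter Real
open scoped NNReal

lemma ev_bound {f : ℕ → ℝ}
    (h : Filter.limsup (fun K : ℕ => ((f K : ℝ) : EReal)) Filter.atTop < ⊤) :
    ∃ M : ℝ, ∀ᶠ K in Filter.atTop, f K ≤ M := by
  obtain ⟨M, hM1, hM2⟩ := exists_between h
  have hMbot : M ≠ ⊥ := fun hbot => by simp [hbot] at hM1
  refine ⟨M.toReal, ?_⟩
  have hev := Filter.eventually_lt_of_limsup_lt hM1
  filter_upwards [hev] with K hK
  have : ((f K : ℝ) : EReal) < ((M.toReal : ℝ) : EReal) := by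
    rwa [EReal.coe_toReal hM2.ne hMbot]
  exact le_of_lt (EReal.coe_lt_coe_iff.mp this)

lemma tendsto_div_bound {f : ℕ → ℝ} (h0 : ∀ K, 0 ≤ f K)
    (h : ∃ M : ℝ, ∀ᶠ K in Filter.atTop, f K ≤ M) :
    Filter.Tendsto (fun K : ℕ => (1 / (K : ℝ)) * f K) Filter.atTop (nhds 0) := by
  obtain ⟨M, hM⟩ := h
  refine squeeze_zero' (Filter.Eventually.of_forall fun K => mul_nonneg (by positivity) (h0 K))
    (hM.mono fun K hK => mul_le_mul_of_nonneg_left hK (by positivity)) ?_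
  have h1 := tendsto_one_div_atTop_nhds_zero_nat.mul_const M
  simpa [mul_comm] using h1

end UREaux


open MeasureTheory ProbabilityTheory Filter

/-- **Uniform convergence of the URE to the loss (common shrinkage factor).**
Under the three limsup moment conditions,
`sup_{0 ≤ λ ≤ 1} |URE_K(λ) − L_K(λ)| → 0` in `L²` (and hence in probability) as
`K → ∞`, where `URE_K(λ) = (1/K)[∑_k d_k σ_rk² + λ² ∑_k d_k Δ_k² − 2λ ∑_k d_k σ_rk²]`
and `L_K(λ) = (1/K) ∑_k d_k (τ̂_rk − λ(τ̂_rk − τ̂_ok) − τ_k)²`. -/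
theorem ure_uniform_loss_approximation_common_shrinkage
(Ω : ℕ → Type*) [mΩ : ∀ K, MeasurableSpace (Ω K)]
    (μ : ∀ K, Measure (Ω K)) (hμ : ∀ K, IsProbabilityMeasure (μ K))
    (d σr σo ξ τv : ∀ K : ℕ, Fin K → ℝ)
    (τr τo : ∀ K : ℕ, Ω K → Fin K → ℝ)
    (hd : ∀ K k, 0 < d K k) (hdsum : ∀ K, 1 ≤ K → ∑ k, d K k = 1)
    (hσr : ∀ K k, 0 < σr K k)
    (hτr_meas : ∀ K k, Measurable fun ω => τr K ω k)
    (hτo_meas : ∀ K k, Measurable fun ω => τo K ω k)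
    (hτr_gauss : ∀ K k, (μ K).map (fun ω => τr K ω k)
        = gaussianReal (τv K k) ⟨σr K k ^ 2, sq_nonneg _⟩)
    (hτr_indep : ∀ K, iIndepFun (fun k ω => τr K ω k) (μ K))
    (hτo_indep : ∀ K, iIndepFun (fun k ω => τo K ω k) (μ K))
    (hro_indep : ∀ K, IndepFun (fun ω => τr K ω) (fun ω => τo K ω) (μ K))
    (hτo_mem : ∀ K k, MemLp (fun ω => τo K ω k) 2 (μ K))
    (hτo_mean : ∀ K k, ∫ ω, τo K ω k ∂(μ K) = τv K k + ξ K k)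
    (hτo_var : ∀ K k, variance (fun ω => τo K ω k) (μ K) = σo K k ^ 2)
    (hlim1 : limsup (fun K : ℕ =>
        (((1 / (K : ℝ)) * ∑ k, (d K k) ^ 2 * (σr K k) ^ 2 * (ξ K k) ^ 2 : ℝ) : EReal))
        atTop < ⊤)
    (hlim2 : limsup (fun K : ℕ =>
        (((1 / (K : ℝ)) * ∑ k, (d K k) ^ 2 * (σr K k) ^ 2 * (σo K k) ^ 2 : ℝ) : EReal))
        atTop < ⊤)
    (hlim3 : limsup (fun K : ℕ =>
        (((1 / (K : ℝ)) * ∑ k, (d K k) ^ 2 * (σr K k) ^ 4 : ℝ) : EReal))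
        atTop < ⊤) :
    Tendsto (fun K : ℕ => ∫ ω,
        (⨆ l : Set.Icc (0 : ℝ) 1,
          |(1 / (K : ℝ)) * ((∑ k, d K k * σr K k ^ 2)
              + (l : ℝ) ^ 2 * ∑ k, d K k * (τo K ω k - τr K ω k) ^ 2
              - 2 * (l : ℝ) * ∑ k, d K k * σr K k ^ 2)
            - (1 / (K : ℝ)) * ∑ k, d K k
                * ((τr K ω k - (l : ℝ) * (τr K ω k - τo K ω k)) - τv K k) ^ 2|) ^ 2
        ∂(μ K)) atTop (nhds 0)
    ∧ ∀ ε : ℝ, 0 < ε →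
        Tendsto (fun K : ℕ => μ K {ω |
          ε ≤ ⨆ l : Set.Icc (0 : ℝ) 1,
            |(1 / (K : ℝ)) * ((∑ k, d K k * σr K k ^ 2)
                + (l : ℝ) ^ 2 * ∑ k, d K k * (τo K ω k - τr K ω k) ^ 2
                - 2 * (l : ℝ) * ∑ k, d K k * σr K k ^ 2)
              - (1 / (K : ℝ)) * ∑ k, d K k
                  * ((τr K ω k - (l : ℝ) * (τr K ω k - τo K ω k)) - τv K k) ^ 2|})
          atTop (nhds 0) := by
  classical
  choose S hSeq hSnn hSint hSbnd using fun K : ℕ => by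
    haveI := hμ K
    exact UREaux.keybound (d K) (σr K) (σo K) (ξ K) (τv K) (τr K) (τo K)
      (hτr_meas K) (hτo_meas K) (hτr_gauss K) (hτr_indep K) (hτo_indep K) (hro_indep K)
      (hτo_mem K) (hτo_mean K) (hτo_var K)
  have hbnd_tendsto : Tendsto (fun K : ℕ =>
      3 * ((UREaux.gM 4 - 1) * ((1 / (K : ℝ)) ^ 2 * ∑ k, d K k ^ 2 * σr K k ^ 4))
        + 8 * ((1 / (K : ℝ)) ^ 2 * ∑ k, d K k ^ 2
            * (σr K k ^ 2 * (σo K k ^ 2 + ξ K k ^ 2)))) atTop (nhds 0) := by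
    obtain ⟨M3, hM3⟩ := UREaux.ev_bound hlim3
    obtain ⟨M1, hM1⟩ := UREaux.ev_bound hlim1
    obtain ⟨M2, hM2⟩ := UREaux.ev_bound hlim2
    have h3 : Tendsto (fun K : ℕ => (1 / (K : ℝ)) ^ 2 * ∑ k, d K k ^ 2 * σr K k ^ 4)
        atTop (nhds 0) := by
      have ht := UREaux.tendsto_div_bound
        (f := fun K : ℕ => 1 / (K : ℝ) * ∑ k, d K k ^ 2 * σr K k ^ 4)
        (fun K => mul_nonneg (by positivity) (Finset.sum_nonneg fun k _ => by positivity))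
        ⟨M3, hM3⟩
      exact ht.congr fun K => by ring
    have hsplit : ∀ K : ℕ, (1 / (K : ℝ)) * ∑ k, d K k ^ 2
          * (σr K k ^ 2 * (σo K k ^ 2 + ξ K k ^ 2))
        = 1 / (K : ℝ) * ∑ k, d K k ^ 2 * σr K k ^ 2 * σo K k ^ 2
          + 1 / (K : ℝ) * ∑ k, d K k ^ 2 * σr K k ^ 2 * ξ K k ^ 2 := by
      intro K
      rw [← mul_add, ← Finset.sum_add_distrib]
      congr 1
      exact Finset.sum_congr rfl fun k _ => by ring
    have h12 : Tendsto (fun K : ℕ => (1 / (K : ℝ)) ^ 2 * ∑ k, d K k ^ 2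
        * (σr K k ^ 2 * (σo K k ^ 2 + ξ K k ^ 2))) atTop (nhds 0) := by
      have ht := UREaux.tendsto_div_bound
        (f := fun K : ℕ => 1 / (K : ℝ) * ∑ k, d K k ^ 2
          * (σr K k ^ 2 * (σo K k ^ 2 + ξ K k ^ 2)))
        (fun K => mul_nonneg (by positivity) (Finset.sum_nonneg fun k _ => by positivity))
        ⟨M2 + M1, by
          filter_upwards [hM2, hM1] with K h2 h1
          rw [hsplit K]
          linarith⟩
      exact ht.congr fun K => by ring
    have hcomb := (h3.const_mul (3 * (UREaux.gM 4 - 1))).add (h12.const_mul 8)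
    norm_num at hcomb
    exact hcomb.congr fun K => by ring
  have htend : Tendsto (fun K : ℕ => ∫ ω, S K ω ^ 2 ∂(μ K)) atTop (nhds 0) :=
    squeeze_zero' (Eventually.of_forall fun K => integral_nonneg fun ω => sq_nonneg _)
      (Eventually.of_forall fun K => hSbnd K) hbnd_tendsto
  constructor
  · exact htend.congr fun K =>
      integral_congr_ae (Eventually.of_forall fun ω => by rw [hSeq K ω])
  · intro ε hε
    have hb : ∀ K : ℕ, μ K {ω | ε ≤ S K ω}
        ≤ ENNReal.ofReal ((∫ ω, S K ω ^ 2 ∂(μ K)) / ε ^ 2) := by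
      intro K
      haveI := hμ K
      have hsub : {ω | ε ≤ S K ω} ⊆ {ω | ε ^ 2 ≤ S K ω ^ 2} := fun ω hω =>
        pow_le_pow_left₀ hε.le hω 2
      have markov := mul_meas_ge_le_integral_of_nonneg (μ := μ K)
        (ae_of_all _ fun ω => sq_nonneg (S K ω)) (hSint K) (ε ^ 2)
      calc μ K {ω | ε ≤ S K ω} ≤ μ K {ω | ε ^ 2 ≤ S K ω ^ 2} := measure_mono hsub
        _ = ENNReal.ofReal ((μ K {ω | ε ^ 2 ≤ S K ω ^ 2}).toReal) :=
            (ENNReal.ofReal_toReal (measure_ne_top _ _)).symm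
        _ ≤ ENNReal.ofReal ((∫ ω, S K ω ^ 2 ∂(μ K)) / ε ^ 2) := by
            apply ENNReal.ofReal_le_ofReal
            rw [le_div_iff₀ (by positivity)]
            rw [measureReal_def] at markov
            linarith [markov]
    have hup : Tendsto (fun K : ℕ => ENNReal.ofReal ((∫ ω, S K ω ^ 2 ∂(μ K)) / ε ^ 2))
        atTop (nhds 0) := by
      have h0 := htend.div_const (ε ^ 2)
      rw [zero_div] at h0
      have h1 := ENNReal.tendsto_ofReal h0
      simpa using h1
    have hmain : Tendsto (fun K : ℕ => μ K {ω | ε ≤ S K ω}) atTop (nhds 0) :=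
      tendsto_nhds_bot_mono' hup hb
    exact hmain.congr fun K => congrArg (μ K)
      (Set.ext fun ω => by simp only [Set.mem_setOf_eq, hSeq K ω])
end

section
/- Let M_K = Σ_{k=1}^K d_k (σ_rk² − (τ̂_rk − τ_k)(τ̂_rk − τ̂_ok)). Then E[M_K] = 0 and E[M_K²] = Σ_{k=1}^K d_k² (σ_rk² ξ_k² + σ_rk² σ_ok² + 2 σ_rk⁴). -/
open MeasureTheory ProbabilityTheory

section AuxLemmas
open Real
open scoped NNReal ENNReal

lemma L_int {b : ℝ} (hb : 0 < b) (n : ℕ) :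
    Integrable (fun x : ℝ => x ^ n * Real.exp (-b * x ^ 2)) := by
  have h : (-1 : ℝ) < n := lt_of_lt_of_le neg_one_lt_zero (Nat.cast_nonneg n)
  simpa [Real.rpow_natCast] using integrable_rpow_mul_exp_neg_mul_sq hb h

lemma L_deriv {b : ℝ} (n : ℕ) (x : ℝ) :
    HasDerivAt (fun x : ℝ => x ^ (n+1) * Real.exp (-b * x ^ 2))
      (((n:ℝ)+1) * (x ^ n * Real.exp (-b*x^2)) - (2*b) * (x ^ (n+2) * Real.exp (-b*x^2))) x := by
  have h1 : HasDerivAt (fun x : ℝ => x ^ (n+1)) (((n:ℝ)+1) * x ^ n) x := by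
    simpa using hasDerivAt_pow (n+1) x
  have h2 : HasDerivAt (fun x : ℝ => Real.exp (-b * x^2)) (Real.exp (-b*x^2) * (-b * (2*x))) x := by
    have h3 : HasDerivAt (fun x : ℝ => -b * x^2) (-b * (2*x)) x := by
      simpa using (hasDerivAt_pow 2 x).const_mul (-b)
    exact h3.exp
  refine (h1.mul h2).congr_deriv ?_
  ring

lemma L_rec {b : ℝ} (hb : 0 < b) (n : ℕ) :
    ∫ x : ℝ, x ^ (n+2) * Real.exp (-b * x ^ 2)
      = (((n:ℝ)+1) / (2*b)) * ∫ x : ℝ, x ^ n * Real.exp (-b * x ^ 2) := by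
  have h0 : ∫ x : ℝ, (((n:ℝ)+1) * (x ^ n * Real.exp (-b*x^2))
      - (2*b) * (x ^ (n+2) * Real.exp (-b*x^2))) = 0 :=
    integral_eq_zero_of_hasDerivAt_of_integrable (L_deriv n)
      (((L_int hb n).const_mul _).sub ((L_int hb (n+2)).const_mul _)) (L_int hb (n+1))
  rw [integral_sub ((L_int hb n).const_mul _) ((L_int hb (n+2)).const_mul _),
    integral_const_mul, integral_const_mul] at h0
  have hb' : (2*b) ≠ 0 := by positivity
  rw [div_mul_eq_mul_div, eq_div_iff hb']
  linarith

lemma L_one {b : ℝ} (hb : 0 < b) :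
    ∫ x : ℝ, x ^ 1 * Real.exp (-b * x ^ 2) = 0 := by
  have hderiv : ∀ x : ℝ, HasDerivAt (fun x : ℝ => -(2*b)⁻¹ * Real.exp (-b * x ^ 2))
      (x ^ 1 * Real.exp (-b * x ^ 2)) x := by
    intro x
    have h3 : HasDerivAt (fun x : ℝ => -b * x^2) (-b * (2*x)) x := by
      simpa using (hasDerivAt_pow 2 x).const_mul (-b)
    have := (h3.exp).const_mul (-(2*b)⁻¹)
    refine this.congr_deriv ?_
    field_simp
  exact integral_eq_zero_of_hasDerivAt_of_integrable hderiv (L_int hb 1)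
    ((integrable_exp_neg_mul_sq hb).const_mul _)


lemma G_pdf_eq (v : ℝ≥0) (x : ℝ) :
    gaussianPDFReal 0 v x = (√(2 * π * v))⁻¹ * Real.exp (-(2*(v:ℝ))⁻¹ * x ^ 2) := by
  rw [gaussianPDFReal]
  congr 1
  rw [show -(x - 0)^2/(2*(v:ℝ)) = -(2*(v:ℝ))⁻¹ * x ^ 2 by ring]

lemma G_integral {v : ℝ≥0} (hv : v ≠ 0) (g : ℝ → ℝ) :
    ∫ x, g x ∂(gaussianReal 0 v) = ∫ x, gaussianPDFReal 0 v x * g x := by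
  rw [gaussianReal_of_var_ne_zero 0 hv]
  have h1 : (gaussianPDF 0 v) = fun x => ((gaussianPDFReal 0 v x).toNNReal : ℝ≥0∞) := rfl
  rw [h1, integral_withDensity_eq_integral_smul
    ((measurable_gaussianPDFReal 0 v).real_toNNReal) g]
  congr 1
  funext x
  rw [NNReal.smul_def, Real.coe_toNNReal _ (gaussianPDFReal_nonneg 0 v x), smul_eq_mul]

lemma G_int_pow {v : ℝ≥0} (hv : v ≠ 0) (n : ℕ) :
    Integrable (fun x : ℝ => x ^ n) (gaussianReal 0 v) := by
  have hvpos : (0:ℝ) < (v:ℝ) := NNReal.coe_pos.mpr (pos_iff_ne_zero.mpr hv)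
  have hb : (0:ℝ) < (2*(v:ℝ))⁻¹ := by positivity
  rw [gaussianReal_of_var_ne_zero 0 hv,
    integrable_withDensity_iff (measurable_gaussianPDF 0 v)
      (Filter.Eventually.of_forall fun x => ENNReal.ofReal_lt_top)]
  have h2 : (fun x : ℝ => x ^ n * (gaussianPDF 0 v x).toReal)
      = fun x : ℝ => (√(2 * π * v))⁻¹ * (x ^ n * Real.exp (-(2*(v:ℝ))⁻¹ * x ^ 2)) := by
    funext x
    rw [gaussianPDF_def, ENNReal.toReal_ofReal (gaussianPDFReal_nonneg 0 v x), G_pdf_eq]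
    ring
  rw [h2]
  exact (L_int hb n).const_mul _

lemma G_moment_rec {v : ℝ≥0} (hv : v ≠ 0) (n : ℕ) :
    ∫ x, x ^ (n+2) ∂(gaussianReal 0 v)
      = ((n:ℝ)+1) * (v:ℝ) * ∫ x, x ^ n ∂(gaussianReal 0 v) := by
  have hvpos : (0:ℝ) < (v:ℝ) := NNReal.coe_pos.mpr (pos_iff_ne_zero.mpr hv)
  have hb : (0:ℝ) < (2*(v:ℝ))⁻¹ := by positivity
  have h2 : ∀ m : ℕ, (fun x : ℝ => gaussianPDFReal 0 v x * x ^ m)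
      = fun x : ℝ => (√(2 * π * v))⁻¹ * (x ^ m * Real.exp (-(2*(v:ℝ))⁻¹ * x ^ 2)) := by
    intro m; funext x; rw [G_pdf_eq]; ring
  rw [G_integral hv, G_integral hv, h2 (n+2), h2 n, integral_const_mul, integral_const_mul,
    L_rec hb n]
  have : ((n:ℝ)+1) / (2 * (2*(v:ℝ))⁻¹) = ((n:ℝ)+1) * (v:ℝ) := by
    field_simp
  rw [this]
  ring

lemma G_zero {v : ℝ≥0} : ∫ x, x ^ 0 ∂(gaussianReal 0 v) = 1 := by
  simp

lemma G_one {v : ℝ≥0} (hv : v ≠ 0) : ∫ x, x ^ 1 ∂(gaussianReal 0 v) = 0 := by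
  have hvpos : (0:ℝ) < (v:ℝ) := NNReal.coe_pos.mpr (pos_iff_ne_zero.mpr hv)
  have hb : (0:ℝ) < (2*(v:ℝ))⁻¹ := by positivity
  have h2 : (fun x : ℝ => gaussianPDFReal 0 v x * x ^ 1)
      = fun x : ℝ => (√(2 * π * v))⁻¹ * (x ^ 1 * Real.exp (-(2*(v:ℝ))⁻¹ * x ^ 2)) := by
    funext x; rw [G_pdf_eq]; ring
  rw [G_integral hv, h2, integral_const_mul, L_one hb, mul_zero]

lemma G_two {v : ℝ≥0} (hv : v ≠ 0) : ∫ x, x ^ 2 ∂(gaussianReal 0 v) = (v:ℝ) := by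
  simpa [G_zero] using G_moment_rec hv 0

lemma G_three {v : ℝ≥0} (hv : v ≠ 0) : ∫ x, x ^ 3 ∂(gaussianReal 0 v) = 0 := by
  have h1 := G_one hv
  have h2 := G_moment_rec hv 1
  norm_num at h2 h1 ⊢
  simpa using h2

lemma G_four {v : ℝ≥0} (hv : v ≠ 0) : ∫ x, x ^ 4 ∂(gaussianReal 0 v) = 3 * (v:ℝ)^2 := by
  have := G_moment_rec hv 2
  rw [G_two hv] at this
  rw [show (4:ℕ) = 2 + 2 from rfl, this]
  norm_num
  ring

lemma per_k {Ω : Type*} [MeasurableSpace Ω] (μ : Measure Ω) [IsProbabilityMeasure μ]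
    (d s o ξ : ℝ) (hs : 0 < s)
    (A B : Ω → ℝ) (hA : Measurable A) (hB : Measurable B)
    (hlaw : μ.map A = gaussianReal 0 ⟨s^2, sq_nonneg _⟩)
    (hAB : IndepFun A B μ)
    (hBmem : MemLp B 2 μ) (hB1 : ∫ ω, B ω ∂μ = ξ) (hB2 : ∫ ω, B ω ^ 2 ∂μ = o^2 + ξ^2)
    (X : Ω → ℝ) (hX : X = fun ω => d * (s^2 - A ω ^ 2 + A ω * B ω)) :
    MemLp X 2 μ ∧ (∫ ω, X ω ∂μ = 0)
      ∧ ∫ ω, X ω ^ 2 ∂μ = d^2 * (s^2*ξ^2 + s^2*o^2 + 2*s^4) := by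
  have hv : (⟨s^2, sq_nonneg s⟩ : ℝ≥0) ≠ 0 :=
    fun h => (pow_ne_zero 2 hs.ne') (congrArg NNReal.toReal h)
  have hVc : ((⟨s^2, sq_nonneg s⟩ : ℝ≥0) : ℝ) = s^2 := rfl
  -- moments of A
  have hAint : ∀ n : ℕ, Integrable (fun ω => A ω ^ n) μ := by
    intro n
    have h := G_int_pow hv n
    rw [← hlaw] at h
    exact (integrable_map_measure (measurable_id.pow_const n).aestronglyMeasurable
      hA.aemeasurable).mp h
  have hAmom : ∀ n : ℕ, ∫ ω, A ω ^ n ∂μ = ∫ x, x ^ n ∂(gaussianReal 0 ⟨s^2, sq_nonneg s⟩) := by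
    intro n
    have hm : Measurable (fun x : ℝ => x ^ n) := measurable_id.pow_const n
    rw [← hlaw, integral_map hA.aemeasurable hm.aestronglyMeasurable]
  have hA1 : ∫ ω, A ω ∂μ = 0 := by
    have h := (hAmom 1).trans (G_one hv)
    simpa using h
  have hA2 : ∫ ω, A ω ^ 2 ∂μ = s^2 := by rw [hAmom 2, G_two hv]; exact hVc
  have hA3 : ∫ ω, A ω ^ 3 ∂μ = 0 := by rw [hAmom 3, G_three hv]
  have hA4 : ∫ ω, A ω ^ 4 ∂μ = 3 * s^4 := by
    rw [hAmom 4, G_four hv]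
    show 3 * (s^2)^2 = 3 * s^4
    ring
  -- B integrability
  have hBint : Integrable B μ := hBmem.integrable one_le_two
  have hB2int : Integrable (fun ω => B ω ^ 2) μ :=
    (memLp_two_iff_integrable_sq hB.aestronglyMeasurable).mp hBmem
  have hA1int : Integrable A μ := by simpa using hAint 1
  -- independence of powers
  have hpow : ∀ m l : ℕ, IndepFun (fun ω => A ω ^ m) (fun ω => B ω ^ l) μ :=
    fun m l => hAB.comp (measurable_id.pow_const m) (measurable_id.pow_const l)
  -- products
  have hABint : Integrable (fun ω => A ω * B ω) μ := hAB.integrable_mul hA1int hBint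
  have hA3Bint : Integrable (fun ω => A ω ^ 3 * B ω) μ := by
    have := (hpow 3 1).integrable_mul (hAint 3) (by simpa using hBint)
    simpa [Pi.mul_def] using this
  have hA2B2int : Integrable (fun ω => A ω ^ 2 * B ω ^ 2) μ :=
    (hpow 2 2).integrable_mul (hAint 2) hB2int
  have hEAB : ∫ ω, A ω * B ω ∂μ = 0 := by
    have h := hAB.integral_mul_eq_mul_integral hA1int.1 hBint.1
    have h2 : ∫ ω, A ω * B ω ∂μ = (∫ ω, A ω ∂μ) * ∫ ω, B ω ∂μ := h
    rw [h2, hA1, zero_mul]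
  have hEA3B : ∫ ω, A ω ^ 3 * B ω ∂μ = 0 := by
    have h := (hpow 3 1).integral_mul_eq_mul_integral (hAint 3).1 (hB.pow_const 1).aestronglyMeasurable
    have h2 : ∫ ω, A ω ^ 3 * B ω ^ 1 ∂μ = (∫ ω, A ω ^ 3 ∂μ) * ∫ ω, B ω ^ 1 ∂μ := h
    simp only [pow_one] at h2
    rw [h2, hA3, zero_mul]
  have hEA2B2 : ∫ ω, A ω ^ 2 * B ω ^ 2 ∂μ = s^2 * (o^2 + ξ^2) := by
    have h : ∫ ω, A ω ^ 2 * B ω ^ 2 ∂μ = (∫ ω, A ω ^ 2 ∂μ) * ∫ ω, B ω ^ 2 ∂μ :=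
      (hpow 2 2).integral_mul_eq_mul_integral (hAint 2).1 hB2int.1
    rw [h, hA2, hB2]
  subst hX
  -- decomposition of X
  have hXd : (fun ω => d * (s^2 - A ω ^ 2 + A ω * B ω))
      = fun ω => d * s^2 + (-d) * (A ω ^ 2) + d * (A ω * B ω) := by
    funext ω; ring
  have hXint : Integrable (fun ω => d * (s^2 - A ω ^ 2 + A ω * B ω)) μ := by
    rw [hXd]
    exact ((integrable_const _).add ((hAint 2).const_mul _)).add (hABint.const_mul _)
  have j1 : Integrable (fun ω => d * s^2 + (-d) * (A ω ^ 2)) μ :=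
    (integrable_const _).add ((hAint 2).const_mul _)
  have hmean : ∫ ω, d * (s^2 - A ω ^ 2 + A ω * B ω) ∂μ = 0 := by
    rw [hXd, integral_add j1 (hABint.const_mul d),
      integral_add (integrable_const _) ((hAint 2).const_mul (-d)),
      integral_const, integral_const_mul, integral_const_mul, hA2, hEAB]
    simp only [measure_univ, probReal_univ, ENNReal.toReal_one, smul_eq_mul, one_mul]
    ring
  -- second moment
  have hX2d : (fun ω => (d * (s^2 - A ω ^ 2 + A ω * B ω)) ^ 2)
      = fun ω => d^2*s^4 + (-2*d^2*s^2) * (A ω ^ 2) + d^2 * (A ω ^ 4)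
        + (2*d^2*s^2) * (A ω * B ω) + (-2*d^2) * (A ω ^ 3 * B ω)
        + d^2 * (A ω ^ 2 * B ω ^ 2) := by
    funext ω; ring
  have i1 : Integrable (fun ω => d^2*s^4 + (-2*d^2*s^2) * (A ω ^ 2)) μ :=
    (integrable_const _).add ((hAint 2).const_mul _)
  have i2 : Integrable (fun ω => d^2*s^4 + (-2*d^2*s^2) * (A ω ^ 2) + d^2 * (A ω ^ 4)) μ :=
    i1.add ((hAint 4).const_mul (d^2))
  have i3 : Integrable (fun ω => d^2*s^4 + (-2*d^2*s^2) * (A ω ^ 2) + d^2 * (A ω ^ 4)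
      + (2*d^2*s^2) * (A ω * B ω)) μ := i2.add (hABint.const_mul (2*d^2*s^2))
  have i4 : Integrable (fun ω => d^2*s^4 + (-2*d^2*s^2) * (A ω ^ 2) + d^2 * (A ω ^ 4)
      + (2*d^2*s^2) * (A ω * B ω) + (-2*d^2) * (A ω ^ 3 * B ω)) μ :=
    i3.add (hA3Bint.const_mul (-2*d^2))
  have i5 : Integrable (fun ω => d^2*s^4 + (-2*d^2*s^2) * (A ω ^ 2) + d^2 * (A ω ^ 4)
      + (2*d^2*s^2) * (A ω * B ω) + (-2*d^2) * (A ω ^ 3 * B ω)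
      + d^2 * (A ω ^ 2 * B ω ^ 2)) μ := i4.add (hA2B2int.const_mul (d^2))
  have hX2int : Integrable (fun ω => (d * (s^2 - A ω ^ 2 + A ω * B ω)) ^ 2) μ := by
    rw [hX2d]; exact i5
  have hsq : ∫ ω, (d * (s^2 - A ω ^ 2 + A ω * B ω)) ^ 2 ∂μ
      = d^2 * (s^2*ξ^2 + s^2*o^2 + 2*s^4) := by
    rw [hX2d, integral_add i4 (hA2B2int.const_mul _), integral_add i3 (hA3Bint.const_mul _),
      integral_add i2 (hABint.const_mul _), integral_add i1 ((hAint 4).const_mul _),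
      integral_add (integrable_const _) ((hAint 2).const_mul _), integral_const,
      integral_const_mul, integral_const_mul, integral_const_mul, integral_const_mul,
      integral_const_mul, hA2, hA4, hEAB, hEA3B, hEA2B2]
    simp only [measure_univ, probReal_univ, ENNReal.toReal_one, smul_eq_mul, one_mul]
    ring
  -- MemLp
  have hXm : Measurable (fun ω => d * (s^2 - A ω ^ 2 + A ω * B ω)) := by fun_prop
  refine ⟨(memLp_two_iff_integrable_sq hXm.aestronglyMeasurable).mpr hX2int, hmean, hsq⟩


end AuxLemmas

/-- **Mean and second moment of the martingale increment sum `M_K`.**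
For `M_K = ∑_k d_k (σ_rk² − (τ̂_rk − τ_k)(τ̂_rk − τ̂_ok))`, we have `E[M_K] = 0`
and `E[M_K²] = ∑_k d_k² (σ_rk² ξ_k² + σ_rk² σ_ok² + 2 σ_rk⁴)`. -/
theorem martingale_sum_mean_and_second_moment
{Ω : Type*} [MeasurableSpace Ω] (μ : Measure Ω) [IsProbabilityMeasure μ]
    (K : ℕ) (hK : 1 ≤ K)
    (d σr σo ξ τv : Fin K → ℝ)
    (hd : ∀ k, 0 < d k) (hσr : ∀ k, 0 < σr k)
    (τr τo : Ω → Fin K → ℝ)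
    (hτr_meas : ∀ k, Measurable fun ω => τr ω k)
    (hτo_meas : ∀ k, Measurable fun ω => τo ω k)
    (hτr_gauss : ∀ k, μ.map (fun ω => τr ω k)
        = gaussianReal (τv k) ⟨σr k ^ 2, sq_nonneg _⟩)
    (hτr_indep : iIndepFun (fun k ω => τr ω k) μ)
    (hτo_indep : iIndepFun (fun k ω => τo ω k) μ)
    (hro_indep : IndepFun (fun ω => τr ω) (fun ω => τo ω) μ)
    (hpairs_indep : iIndepFun
        (fun k ω => (τr ω k, τo ω k)) μ)
    (hτo_mem : ∀ k, MemLp (fun ω => τo ω k) 2 μ)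
    (hτo_mean : ∀ k, ∫ ω, τo ω k ∂μ = τv k + ξ k)
    (hτo_var : ∀ k, variance (fun ω => τo ω k) μ = σo k ^ 2) :
    (∫ ω, (∑ k, d k * (σr k ^ 2 - (τr ω k - τv k) * (τr ω k - τo ω k))) ∂μ = 0)
    ∧ (∫ ω, (∑ k, d k * (σr k ^ 2 - (τr ω k - τv k) * (τr ω k - τo ω k))) ^ 2 ∂μ
        = ∑ k, (d k) ^ 2
            * (σr k ^ 2 * ξ k ^ 2 + σr k ^ 2 * σo k ^ 2 + 2 * σr k ^ 4)) := by
  -- the summands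
  set F : Fin K → Ω → ℝ :=
    fun k ω => d k * (σr k ^ 2 - (τr ω k - τv k) * (τr ω k - τo ω k)) with hF
  have key : ∀ k : Fin K, MemLp (F k) 2 μ ∧ (∫ ω, F k ω ∂μ = 0)
      ∧ ∫ ω, (F k ω) ^ 2 ∂μ
        = (d k)^2 * (σr k^2 * ξ k^2 + σr k^2 * σo k^2 + 2 * σr k^4) := by
    intro k
    have hA : Measurable (fun ω => τr ω k - τv k) := (hτr_meas k).sub measurable_const
    have hB : Measurable (fun ω => τo ω k - τv k) := (hτo_meas k).sub measurable_const
    have hlaw : μ.map (fun ω => τr ω k - τv k)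
        = gaussianReal 0 ⟨σr k ^ 2, sq_nonneg _⟩ := by
      have hc : (fun ω => τr ω k - τv k)
          = (fun x : ℝ => x + (-(τv k))) ∘ (fun ω => τr ω k) := by
        funext ω; simp [sub_eq_add_neg]
      rw [hc, ← Measure.map_map (measurable_add_const (-(τv k))) (hτr_meas k), hτr_gauss k,
        gaussianReal_map_add_const (μ := τv k) (v := ⟨σr k ^ 2, sq_nonneg _⟩)]
      simp
    have hAB : IndepFun (fun ω => τr ω k - τv k) (fun ω => τo ω k - τv k) μ := by
      have hφ : Measurable (fun v : Fin K → ℝ => v k - τv k) :=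
        (measurable_pi_apply k).sub measurable_const
      exact hro_indep.comp hφ hφ
    have hBmem : MemLp (fun ω => τo ω k - τv k) 2 μ :=
      (hτo_mem k).sub (memLp_const (τv k))
    have hOint : Integrable (fun ω => τo ω k) μ := (hτo_mem k).integrable one_le_two
    have hB1 : ∫ ω, τo ω k - τv k ∂μ = ξ k := by
      rw [integral_sub hOint (integrable_const _), hτo_mean k, integral_const]
      simp
    have hO2int : Integrable (fun ω => τo ω k ^ 2) μ :=
      (memLp_two_iff_integrable_sq (hτo_meas k).aestronglyMeasurable).mp (hτo_mem k)
    have hO2 : ∫ ω, τo ω k ^ 2 ∂μ = σo k ^ 2 + (τv k + ξ k)^2 := by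
      have hvd := variance_eq_sub (hτo_mem k)
      rw [hτo_var k, hτo_mean k] at hvd
      have hconv : μ[(fun ω => τo ω k) ^ 2] = ∫ ω, τo ω k ^ 2 ∂μ := by
        congr 1
      rw [hconv] at hvd
      linarith
    have hB2 : ∫ ω, (τo ω k - τv k) ^ 2 ∂μ = σo k ^ 2 + ξ k ^ 2 := by
      have hexp : (fun ω => (τo ω k - τv k) ^ 2)
          = fun ω => τo ω k ^ 2 + (-(2 * τv k)) * (τo ω k) + (τv k)^2 := by
        funext ω; ring
      have j1 : Integrable (fun ω => τo ω k ^ 2 + (-(2 * τv k)) * (τo ω k)) μ :=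
        hO2int.add (hOint.const_mul _)
      calc ∫ ω, (τo ω k - τv k) ^ 2 ∂μ
          = ∫ ω, (τo ω k ^ 2 + (-(2 * τv k)) * (τo ω k) + (τv k)^2) ∂μ := by rw [← hexp]
        _ = σo k ^ 2 + ξ k ^ 2 := by
            rw [integral_add j1 (integrable_const _),
              integral_add hO2int (hOint.const_mul _), integral_const, integral_const_mul,
              hO2, hτo_mean k]
            simp only [measure_univ, probReal_univ, ENNReal.toReal_one, smul_eq_mul, one_mul]
            ring
    have := per_k μ (d k) (σr k) (σo k) (ξ k) (hσr k)
      (fun ω => τr ω k - τv k) (fun ω => τo ω k - τv k) hA hB hlaw hAB hBmem hB1 hB2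
      (F k) (by funext ω; rw [hF]; ring)
    exact this
  -- independence of the summands
  have hiID : iIndepFun F μ := by
    have hg : ∀ k : Fin K,
        Measurable (fun p : ℝ × ℝ => d k * (σr k ^ 2 - (p.1 - τv k) * (p.1 - p.2))) :=
      fun k => by fun_prop
    exact hpairs_indep.comp _ hg
  have hpair : Set.Pairwise ↑(Finset.univ : Finset (Fin K))
      (fun i j => IndepFun (F i) (F j) μ) := fun i _ j _ hij => hiID.indepFun hij
  have hint : ∀ k : Fin K, Integrable (F k) μ := fun k => (key k).1.integrable one_le_two
  have hmemsum : MemLp (∑ k, F k) 2 μ := memLp_finset_sum' _ (fun k _ => (key k).1)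
  have hmean : ∫ ω, (∑ k, F k ω) ∂μ = 0 := by
    rw [integral_finset_sum Finset.univ (fun k _ => hint k)]
    exact Finset.sum_eq_zero fun k _ => (key k).2.1
  constructor
  · exact hmean
  · have hvarsum := IndepFun.variance_sum (fun k (_ : k ∈ Finset.univ) => (key k).1) hpair
    have hvd := variance_eq_sub hmemsum
    have hc1 : μ[(∑ k, F k) ^ 2] = ∫ ω, (∑ k, F k ω) ^ 2 ∂μ := by
      congr 1
      funext ω
      simp [Finset.sum_apply]
    have hc2 : μ[∑ k, F k] = ∫ ω, (∑ k, F k ω) ∂μ := by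
      congr 1
      funext ω
      simp [Finset.sum_apply]
    rw [hc1, hc2, hmean] at hvd
    have hvark : ∀ k : Fin K, variance (F k) μ
        = (d k)^2 * (σr k^2 * ξ k^2 + σr k^2 * σo k^2 + 2 * σr k^4) := by
      intro k
      have h := variance_eq_sub (key k).1
      have hck : μ[(F k) ^ 2] = ∫ ω, (F k ω) ^ 2 ∂μ := by
        congr 1
      rw [hck, (key k).2.2, (key k).2.1] at h
      simpa using h
    calc ∫ ω, (∑ k, F k ω) ^ 2 ∂μ
        = variance (∑ k, F k) μ := by rw [hvarsum] at hvd ⊢; linarith [hvd]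
      _ = ∑ k, variance (F k) μ := hvarsum
      _ = _ := Finset.sum_congr rfl fun k _ => hvark k
end

section
/- Assume limsup_{K→∞} (1/K) Σ_k d_k² σ_rk⁶ ξ_k² < ∞, limsup_{K→∞} (1/K) Σ_k d_k² σ_rk⁶ σ_ok² < ∞, limsup_{K→∞} (1/K) Σ_k d_k² σ_rk⁸ < ∞, and limsup_{K→∞} (1/K) Σ_k d_k² σ_rk⁴ < ∞. Then sup_{0 ≤ λ ≤ 1} |URE_K(λ) − L_K(λ)| → 0 in L² (and hence in probability) as K → ∞, where URE_K(λ) = (1/K)[Σ_k d_k σ_rk² + λ² Σ_k d_k σ_rk⁴ Δ_k² − 2λ Σ_k d_k σ_rk⁴] and L_K(λ) = (1/K) Σ_k d_k (τ̂_rk − λ σ_rk² (τ̂_rk − τ̂_ok) − τ_k)². -/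
open MeasureTheory ProbabilityTheory Filter
open scoped NNReal ENNReal Topology

/-!
Put `Xₖ = τ̂_rk - τₖ` and `Wₖ = τ̂_ok - τₖ`. Then `URE_K(λ) - L_K(λ) = (A - 2λ(C + D)) / K`
with `A = ∑ dₖ (σ_rk² - Xₖ²)`, `C = ∑ dₖ σ_rk² (σ_rk² - Xₖ²)` and `D = ∑ dₖ σ_rk² Xₖ Wₖ`.
Being affine in `λ`, it is largest in absolute value at an endpoint of `[0, 1]`, so the
square of the supremum is at most `(2A² + 16C² + 16D²) / K²`. The summands of each of `A`,
`C`, `D` are pairwise orthogonal in `L²` (independence of the Gaussian coordinates, and of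
`τ̂_r` from `τ̂_o`), so `E A² = Var(Z²) ∑ dₖ² σ_rk⁴`, `E C² = Var(Z²) ∑ dₖ² σ_rk⁸` and
`E D² = ∑ dₖ² σ_rk⁶ (σ_ok² + ξₖ²)`, with `Z` standard Gaussian. The limsup conditions make
these `O(K)`, so the supremum is `O(1/K)` in mean square, and Markov's inequality gives
convergence in probability.
-/

lemma integral_sq_gaussianReal_zero_one : ∫ z, z ^ 2 ∂gaussianReal 0 1 = 1 := by
  rw [← variance_of_integral_eq_zero aemeasurable_id' (by simp)]
  simp

lemma memLp_sq_gaussianReal (μ : ℝ) (v : ℝ≥0) :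
    MemLp (fun z => z ^ 2) 2 (gaussianReal μ v) := by
  refine (memLp_two_iff_integrable_sq (by fun_prop)).2 ?_
  have h4 := (memLp_id_gaussianReal (μ := μ) (v := v) 4).integrable_norm_pow'
  simp only [id, Real.norm_eq_abs] at h4
  convert h4 using 2 with z
  rw [← pow_mul, show 4 = 2 * 2 from rfl, pow_mul, pow_mul, sq_abs]

/-- `Var[Z²]` for a standard Gaussian `Z`. It equals `2`, but only its finiteness matters. -/
noncomputable def stdGaussianSqDevMoment : ℝ := ∫ z, (1 - z ^ 2) ^ 2 ∂gaussianReal 0 1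

section GaussianMoments

variable {Ω : Type*} [MeasurableSpace Ω] {P : Measure Ω} {X : Ω → ℝ} {m σ : ℝ} {v : ℝ≥0}

lemma aemeasurable_of_map_eq_gaussianReal (hX : P.map X = gaussianReal m v) :
    AEMeasurable X P :=
  aemeasurable_of_map_neZero (by rw [hX]; infer_instance)

lemma map_sub_eq_map_mul_of_map_eq_gaussianReal (hX : P.map X = gaussianReal m v)
    (hv : (v : ℝ) = σ ^ 2) :
    P.map (fun ω => X ω - m) = (gaussianReal 0 1).map (σ * ·) := by
  have h := AEMeasurable.map_map_of_aemeasurable (g := fun x => x - m) (by fun_prop)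
    (aemeasurable_of_map_eq_gaussianReal hX)
  rw [Function.comp_def] at h
  rw [gaussianReal_map_const_mul, ← h, hX, gaussianReal_map_sub_const, sub_self, mul_zero,
    mul_one]
  congr
  ext
  simp [hv]

lemma integral_comp_sub_of_map_eq_gaussianReal (hX : P.map X = gaussianReal m v)
    (hv : (v : ℝ) = σ ^ 2) {g : ℝ → ℝ} (hg : Measurable g) :
    ∫ ω, g (X ω - m) ∂P = ∫ z, g (σ * z) ∂gaussianReal 0 1 := by
  have hXm := aemeasurable_of_map_eq_gaussianReal hX
  rw [← integral_map (by fun_prop) hg.aestronglyMeasurable,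
    map_sub_eq_map_mul_of_map_eq_gaussianReal hX hv,
    integral_map (by fun_prop) hg.aestronglyMeasurable]

lemma memLp_comp_sub_of_map_eq_gaussianReal (hX : P.map X = gaussianReal m v)
    (hv : (v : ℝ) = σ ^ 2) {g : ℝ → ℝ} (hg : Measurable g) {p : ℝ≥0∞}
    (hgp : MemLp (fun z => g (σ * z)) p (gaussianReal 0 1)) :
    MemLp (fun ω => g (X ω - m)) p P := by
  have hXm := aemeasurable_of_map_eq_gaussianReal hX
  refine (memLp_map_measure_iff (g := g) hg.aestronglyMeasurable (by fun_prop)).1 ?_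
  rw [map_sub_eq_map_mul_of_map_eq_gaussianReal hX hv]
  exact (memLp_map_measure_iff hg.aestronglyMeasurable (by fun_prop)).2 hgp

lemma memLp_sub_of_map_eq_gaussianReal (hX : P.map X = gaussianReal m v)
    (hv : (v : ℝ) = σ ^ 2) : MemLp (fun ω => X ω - m) 2 P :=
  memLp_comp_sub_of_map_eq_gaussianReal hX hv measurable_id
    ((memLp_id_gaussianReal 2).const_mul σ)

lemma integral_sub_of_map_eq_gaussianReal (hX : P.map X = gaussianReal m v)
    (hv : (v : ℝ) = σ ^ 2) : ∫ ω, (X ω - m) ∂P = 0 := by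
  rw [integral_comp_sub_of_map_eq_gaussianReal hX hv (g := fun y => y) measurable_id',
    integral_const_mul, integral_id_gaussianReal, mul_zero]

lemma integral_sub_sq_of_map_eq_gaussianReal (hX : P.map X = gaussianReal m v)
    (hv : (v : ℝ) = σ ^ 2) : ∫ ω, (X ω - m) ^ 2 ∂P = σ ^ 2 := by
  rw [integral_comp_sub_of_map_eq_gaussianReal hX hv (g := fun y => y ^ 2) (by fun_prop)]
  simp_rw [mul_pow]
  rw [integral_const_mul, integral_sq_gaussianReal_zero_one, mul_one]

lemma memLp_sqDev_of_map_eq_gaussianReal (hX : P.map X = gaussianReal m v)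
    (hv : (v : ℝ) = σ ^ 2) : MemLp (fun ω => σ ^ 2 - (X ω - m) ^ 2) 2 P := by
  refine memLp_comp_sub_of_map_eq_gaussianReal hX hv (g := fun y => σ ^ 2 - y ^ 2)
    (by fun_prop) ?_
  simp_rw [mul_pow]
  exact (memLp_const _).sub ((memLp_sq_gaussianReal 0 1).const_mul _)

lemma integral_sqDev_of_map_eq_gaussianReal [IsProbabilityMeasure P]
    (hX : P.map X = gaussianReal m v) (hv : (v : ℝ) = σ ^ 2) :
    ∫ ω, (σ ^ 2 - (X ω - m) ^ 2) ∂P = 0 := by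
  have hint : Integrable (fun ω => (X ω - m) ^ 2) P :=
    (memLp_sub_of_map_eq_gaussianReal hX hv).integrable_sq
  rw [integral_sub (integrable_const _) hint, integral_sub_sq_of_map_eq_gaussianReal hX hv]
  simp

lemma integral_sqDev_sq_of_map_eq_gaussianReal (hX : P.map X = gaussianReal m v)
    (hv : (v : ℝ) = σ ^ 2) :
    ∫ ω, (σ ^ 2 - (X ω - m) ^ 2) ^ 2 ∂P = σ ^ 4 * stdGaussianSqDevMoment := by
  rw [integral_comp_sub_of_map_eq_gaussianReal hX hv (g := fun y => (σ ^ 2 - y ^ 2) ^ 2)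
    (by fun_prop), stdGaussianSqDevMoment, ← integral_const_mul]
  congr with z
  ring

end GaussianMoments

section SquareOfSum

variable {Ω ι : Type*} [MeasurableSpace Ω] {P : Measure Ω} [Fintype ι]

lemma integral_sq_sum_of_orthogonal {Z : ι → Ω → ℝ} (hZ : ∀ i, MemLp (Z i) 2 P)
    (horth : Pairwise fun i j => ∫ ω, Z i ω * Z j ω ∂P = 0) :
    ∫ ω, (∑ i, Z i ω) ^ 2 ∂P = ∑ i, ∫ ω, Z i ω ^ 2 ∂P := by
  have hint (i j : ι) : Integrable (fun ω => Z i ω * Z j ω) P := (hZ i).integrable_mul (hZ j)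
  simp_rw [sq, Finset.sum_mul_sum]
  rw [integral_finsetSum _ fun i _ => integrable_finsetSum _ fun j _ => hint i j]
  refine Finset.sum_congr rfl fun i _ => ?_
  rw [integral_finsetSum _ fun j _ => hint i j,
    Finset.sum_eq_single i (fun j _ hji => horth hji.symm) (by simp)]

lemma integral_sq_sum_of_indepFun {Z : ι → Ω → ℝ} (hZ : ∀ i, MemLp (Z i) 2 P)
    (hind : Pairwise fun i j => IndepFun (Z i) (Z j) P) (hmean : ∀ i, ∫ ω, Z i ω ∂P = 0) :
    ∫ ω, (∑ i, Z i ω) ^ 2 ∂P = ∑ i, ∫ ω, Z i ω ^ 2 ∂P :=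
  integral_sq_sum_of_orthogonal hZ fun i j hij => by
    beta_reduce
    rw [(hind hij).integral_fun_mul_eq_mul_integral (hZ i).aestronglyMeasurable
      (hZ j).aestronglyMeasurable, hmean, zero_mul]

lemma ProbabilityTheory.IndepFun.memLp_two_mul {f g : Ω → ℝ} (hfg : IndepFun f g P)
    (hf : MemLp f 2 P) (hg : MemLp g 2 P) : MemLp (fun ω => f ω * g ω) 2 P := by
  refine (memLp_two_iff_integrable_sq (hf.aestronglyMeasurable.mul hg.aestronglyMeasurable)).2 ?_
  show Integrable (fun ω => (f ω * g ω) ^ 2) P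
  simp_rw [mul_pow]
  exact (hfg.comp (measurable_id.pow_const 2) (measurable_id.pow_const 2)).integrable_mul
    hf.integrable_sq hg.integrable_sq

/-- Independence of the two vectors factors every moment `E[YᵢVᵢYⱼVⱼ]` as
`E[YᵢYⱼ] E[VᵢVⱼ]`. -/
lemma integral_sq_sum_mul_of_indepFun {Y V : Ω → ι → ℝ} (hYV : IndepFun Y V P)
    (hY : ∀ i, MemLp (fun ω => Y ω i) 2 P) (hV : ∀ i, MemLp (fun ω => V ω i) 2 P)
    (horth : Pairwise fun i j => ∫ ω, Y ω i * Y ω j ∂P = 0) :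
    ∫ ω, (∑ i, Y ω i * V ω i) ^ 2 ∂P = ∑ i, (∫ ω, Y ω i ^ 2 ∂P) * ∫ ω, V ω i ^ 2 ∂P := by
  have hind (i j : ι) : IndepFun (fun ω => Y ω i * Y ω j) (fun ω => V ω i * V ω j) P :=
    hYV.comp (φ := fun y : ι → ℝ => y i * y j) (ψ := fun y : ι → ℝ => y i * y j)
      (by fun_prop) (by fun_prop)
  have hmoment (i j : ι) : ∫ ω, Y ω i * V ω i * (Y ω j * V ω j) ∂P
      = (∫ ω, Y ω i * Y ω j ∂P) * ∫ ω, V ω i * V ω j ∂P := by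
    rw [← (hind i j).integral_fun_mul_eq_mul_integral
      ((hY i).integrable_mul (hY j)).aestronglyMeasurable
      ((hV i).integrable_mul (hV j)).aestronglyMeasurable]
    congr with ω
    ring
  have hYV_i (i : ι) : IndepFun (fun ω => Y ω i) (fun ω => V ω i) P :=
    hYV.comp (measurable_pi_apply i) (measurable_pi_apply i)
  rw [integral_sq_sum_of_orthogonal (fun i => (hYV_i i).memLp_two_mul (hY i) (hV i))
    fun i j hij => by beta_reduce; rw [hmoment, horth hij, zero_mul]]
  refine Finset.sum_congr rfl fun i _ => ?_
  simp_rw [sq]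
  exact hmoment i i

end SquareOfSum

lemma integral_sub_sq_of_integral_of_variance {Ω : Type*} [MeasurableSpace Ω] {P : Measure Ω}
    [IsProbabilityMeasure P] {W : Ω → ℝ} (hW : MemLp W 2 P) {m ξ s : ℝ}
    (hmean : ∫ ω, W ω ∂P = m + ξ) (hvar : variance W P = s ^ 2) :
    ∫ ω, (W ω - m) ^ 2 ∂P = s ^ 2 + ξ ^ 2 := by
  have hvar' := variance_eq_sub (X := fun ω => W ω - m) (hW.sub (memLp_const m))
  rw [variance_sub_const hW.aestronglyMeasurable, hvar,
    integral_sub (hW.integrable one_le_two) (integrable_const m), hmean] at hvar'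
  simp only [Pi.pow_apply, integral_const, probReal_univ, smul_eq_mul, one_mul] at hvar'
  linarith

lemma ciSup_abs_sub_mul_Icc (a b : ℝ) :
    ⨆ l : Set.Icc (0 : ℝ) 1, |a - l * b| = max |a| |a - b| := by
  have hle (l : Set.Icc (0 : ℝ) 1) : |a - l * b| ≤ max |a| |a - b| := by
    obtain ⟨l, hl₀, hl₁⟩ := l
    calc |a - l * b| = |(1 - l) * a + l * (a - b)| := by ring_nf
      _ ≤ (1 - l) * |a| + l * |a - b| := by
        refine (abs_add_le _ _).trans_eq ?_
        rw [abs_mul, abs_mul, abs_of_nonneg (sub_nonneg.2 hl₁), abs_of_nonneg hl₀]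
      _ ≤ (1 - l) * max |a| |a - b| + l * max |a| |a - b| := by
        gcongr
        · exact le_max_left _ _
        · exact le_max_right _ _
      _ = max |a| |a - b| := by ring
  have hbdd : BddAbove (Set.range fun l : Set.Icc (0 : ℝ) 1 => |a - l * b|) :=
    ⟨_, Set.forall_mem_range.2 hle⟩
  refine le_antisymm (ciSup_le hle) (max_le ?_ ?_)
  · simpa using le_ciSup hbdd ⟨0, le_rfl, zero_le_one⟩
  · simpa using le_ciSup hbdd ⟨1, zero_le_one, le_rfl⟩

section UreLossGap

variable {ι : Type*} [Fintype ι]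

/-- `sup_{λ ∈ [0,1]} |s · URE(λ) - s · L(λ)|` for realizations `x` of `τ̂_r` and `y` of `τ̂_o`;
the paper's statistic is `s = 1 / K`. -/
noncomputable def ureLossGap (s : ℝ) (d σ τ x y : ι → ℝ) : ℝ :=
  ⨆ l : Set.Icc (0 : ℝ) 1,
    |s * ((∑ k, d k * σ k ^ 2) + (l : ℝ) ^ 2 * ∑ k, d k * σ k ^ 4 * (y k - x k) ^ 2
        - 2 * (l : ℝ) * ∑ k, d k * σ k ^ 4)
      - s * ∑ k, d k * ((x k - (l : ℝ) * σ k ^ 2 * (x k - y k)) - τ k) ^ 2|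

def sqDevSum (c σ τ x : ι → ℝ) : ℝ := ∑ k, c k * (σ k ^ 2 - (x k - τ k) ^ 2)

def crossSum (c τ x y : ι → ℝ) : ℝ := ∑ k, c k * (x k - τ k) * (y k - τ k)

lemma ure_sub_loss_eq (d σ τ x y : ι → ℝ) (l : ℝ) :
    ((∑ k, d k * σ k ^ 2) + l ^ 2 * ∑ k, d k * σ k ^ 4 * (y k - x k) ^ 2
        - 2 * l * ∑ k, d k * σ k ^ 4)
      - ∑ k, d k * ((x k - l * σ k ^ 2 * (x k - y k)) - τ k) ^ 2
    = sqDevSum d σ τ x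
      - l * (2 * (sqDevSum (fun k => d k * σ k ^ 2) σ τ x
        + crossSum (fun k => d k * σ k ^ 2) τ x y)) := by
  simp only [sqDevSum, crossSum, Finset.mul_sum, ← Finset.sum_add_distrib,
    ← Finset.sum_sub_distrib]
  exact Finset.sum_congr rfl fun k _ => by ring

lemma ureLossGap_eq (s : ℝ) (d σ τ x y : ι → ℝ) :
    ureLossGap s d σ τ x y = max |s * sqDevSum d σ τ x|
      |s * sqDevSum d σ τ x - s * (2 * (sqDevSum (fun k => d k * σ k ^ 2) σ τ x
        + crossSum (fun k => d k * σ k ^ 2) τ x y))| := by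
  rw [← ciSup_abs_sub_mul_Icc]
  refine iSup_congr fun l => ?_
  rw [← mul_sub, ure_sub_loss_eq, mul_sub, mul_left_comm]

lemma ureLossGap_sq_le (s : ℝ) (d σ τ x y : ι → ℝ) :
    ureLossGap s d σ τ x y ^ 2 ≤ s ^ 2 * (2 * sqDevSum d σ τ x ^ 2
      + 16 * sqDevSum (fun k => d k * σ k ^ 2) σ τ x ^ 2
      + 16 * crossSum (fun k => d k * σ k ^ 2) τ x y ^ 2) := by
  rw [ureLossGap_eq]
  set a := sqDevSum d σ τ x
  set c := sqDevSum (fun k => d k * σ k ^ 2) σ τ x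
  set e := crossSum (fun k => d k * σ k ^ 2) τ x y
  rcases max_cases |s * a| |s * a - s * (2 * (c + e))| with ⟨h, _⟩ | ⟨h, _⟩ <;>
    rw [h, sq_abs] <;>
    nlinarith [sq_nonneg (s * a + s * (2 * (c + e))), sq_nonneg (s * (c - e)),
      sq_nonneg (s * c), sq_nonneg (s * e)]

lemma continuous_ureLossGap (s : ℝ) (d σ τ : ι → ℝ) :
    Continuous fun p : (ι → ℝ) × (ι → ℝ) => ureLossGap s d σ τ p.1 p.2 := by
  simp_rw [ureLossGap_eq, sqDevSum, crossSum]
  fun_prop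

end UreLossGap

section NoiseSums

variable {Ω ι : Type*} [MeasurableSpace Ω] {P : Measure Ω} [Fintype ι]
  {σ τ : ι → ℝ} {X : Ω → ι → ℝ}

lemma memLp_sqDevSum
    (hX : ∀ i, P.map (fun ω => X ω i) = gaussianReal (τ i) ⟨σ i ^ 2, sq_nonneg _⟩) (c : ι → ℝ) :
    MemLp (fun ω => sqDevSum c σ τ (X ω)) 2 P :=
  memLp_finsetSum _ fun i _ => (memLp_sqDev_of_map_eq_gaussianReal (hX i) rfl).const_mul (c i)

lemma integral_sqDevSum_sq [IsProbabilityMeasure P]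
    (hX : ∀ i, P.map (fun ω => X ω i) = gaussianReal (τ i) ⟨σ i ^ 2, sq_nonneg _⟩)
    (hXind : iIndepFun (fun i ω => X ω i) P) (c : ι → ℝ) :
    ∫ ω, sqDevSum c σ τ (X ω) ^ 2 ∂P = stdGaussianSqDevMoment * ∑ i, c i ^ 2 * σ i ^ 4 := by
  have hind : Pairwise fun i j => IndepFun (fun ω => c i * (σ i ^ 2 - (X ω i - τ i) ^ 2))
      (fun ω => c j * (σ j ^ 2 - (X ω j - τ j) ^ 2)) P := fun i j hij =>
    (hXind.indepFun hij).comp (φ := fun x => c i * (σ i ^ 2 - (x - τ i) ^ 2))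
      (ψ := fun x => c j * (σ j ^ 2 - (x - τ j) ^ 2)) (by fun_prop) (by fun_prop)
  simp only [sqDevSum]
  rw [integral_sq_sum_of_indepFun
    (fun i => (memLp_sqDev_of_map_eq_gaussianReal (hX i) rfl).const_mul (c i)) hind
    fun i => by
      rw [integral_const_mul, integral_sqDev_of_map_eq_gaussianReal (hX i) rfl, mul_zero],
    Finset.mul_sum]
  refine Finset.sum_congr rfl fun i _ => ?_
  simp_rw [mul_pow (c i)]
  rw [integral_const_mul, integral_sqDev_sq_of_map_eq_gaussianReal (hX i) rfl]
  ring

variable {W : Ω → ι → ℝ}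

lemma memLp_crossSum [IsFiniteMeasure P]
    (hX : ∀ i, P.map (fun ω => X ω i) = gaussianReal (τ i) ⟨σ i ^ 2, sq_nonneg _⟩)
    (hXW : IndepFun X W P) (hW : ∀ i, MemLp (fun ω => W ω i) 2 P) (c : ι → ℝ) :
    MemLp (fun ω => crossSum c τ (X ω) (W ω)) 2 P := by
  refine memLp_finsetSum _ fun i _ => ?_
  have hXW_i : IndepFun (fun ω => c i * (X ω i - τ i)) (fun ω => W ω i - τ i) P :=
    hXW.comp (φ := fun x : ι → ℝ => c i * (x i - τ i)) (ψ := fun y : ι → ℝ => y i - τ i)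
      (by fun_prop) (by fun_prop)
  exact hXW_i.memLp_two_mul ((memLp_sub_of_map_eq_gaussianReal (hX i) rfl).const_mul (c i))
    ((hW i).sub (memLp_const _))

lemma integral_crossSum_sq [IsProbabilityMeasure P]
    (hX : ∀ i, P.map (fun ω => X ω i) = gaussianReal (τ i) ⟨σ i ^ 2, sq_nonneg _⟩)
    (hXind : iIndepFun (fun i ω => X ω i) P) (hXW : IndepFun X W P)
    (hW : ∀ i, MemLp (fun ω => W ω i) 2 P) (c : ι → ℝ) :
    ∫ ω, crossSum c τ (X ω) (W ω) ^ 2 ∂P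
      = ∑ i, c i ^ 2 * σ i ^ 2 * ∫ ω, (W ω i - τ i) ^ 2 ∂P := by
  have hY (i : ι) : MemLp (fun ω => c i * (X ω i - τ i)) 2 P :=
    (memLp_sub_of_map_eq_gaussianReal (hX i) rfl).const_mul (c i)
  have horth : Pairwise fun i j =>
      ∫ ω, c i * (X ω i - τ i) * (c j * (X ω j - τ j)) ∂P = 0 := fun i j hij => by
    have hind : IndepFun (fun ω => c i * (X ω i - τ i)) (fun ω => c j * (X ω j - τ j)) P :=
      (hXind.indepFun hij).comp (φ := fun x => c i * (x - τ i))
        (ψ := fun x => c j * (x - τ j)) (by fun_prop) (by fun_prop)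
    beta_reduce
    rw [hind.integral_fun_mul_eq_mul_integral (hY i).aestronglyMeasurable
      (hY j).aestronglyMeasurable, integral_const_mul,
      integral_sub_of_map_eq_gaussianReal (hX i) rfl, mul_zero, zero_mul]
  simp only [crossSum]
  rw [integral_sq_sum_mul_of_indepFun (Y := fun ω i => c i * (X ω i - τ i))
    (V := fun ω i => W ω i - τ i)
    (hXW.comp (φ := fun (x : ι → ℝ) i => c i * (x i - τ i))
      (ψ := fun (y : ι → ℝ) i => y i - τ i) (by fun_prop) (by fun_prop))
    hY (fun i => (hW i).sub (memLp_const _)) horth]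
  refine Finset.sum_congr rfl fun i _ => ?_
  simp_rw [mul_pow (c i)]
  rw [integral_const_mul, integral_sub_sq_of_map_eq_gaussianReal (hX i) rfl]

end NoiseSums

theorem integral_ureLossGap_sq_le {Ω ι : Type*} [MeasurableSpace Ω] {P : Measure Ω}
    [IsProbabilityMeasure P] [Fintype ι] (s : ℝ) (d σ σo ξ τ : ι → ℝ) {X W : Ω → ι → ℝ}
    (hX : ∀ i, P.map (fun ω => X ω i) = gaussianReal (τ i) ⟨σ i ^ 2, sq_nonneg _⟩)
    (hXind : iIndepFun (fun i ω => X ω i) P) (hXW : IndepFun X W P)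
    (hW : ∀ i, MemLp (fun ω => W ω i) 2 P) (hWmean : ∀ i, ∫ ω, W ω i ∂P = τ i + ξ i)
    (hWvar : ∀ i, variance (fun ω => W ω i) P = σo i ^ 2) :
    Integrable (fun ω => ureLossGap s d σ τ (X ω) (W ω) ^ 2) P ∧
      ∫ ω, ureLossGap s d σ τ (X ω) (W ω) ^ 2 ∂P
        ≤ s ^ 2 * (2 * stdGaussianSqDevMoment * ∑ i, d i ^ 2 * σ i ^ 4
          + 16 * stdGaussianSqDevMoment * ∑ i, d i ^ 2 * σ i ^ 8
          + 16 * ∑ i, d i ^ 2 * σ i ^ 6 * σo i ^ 2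
          + 16 * ∑ i, d i ^ 2 * σ i ^ 6 * ξ i ^ 2) := by
  set c : ι → ℝ := fun i => d i * σ i ^ 2
  have hA := (memLp_sqDevSum hX d).integrable_sq.const_mul 2
  have hC := (memLp_sqDevSum hX c).integrable_sq.const_mul 16
  have hD := (memLp_crossSum hX hXW hW c).integrable_sq.const_mul 16
  have hAC : Integrable (fun ω => 2 * sqDevSum d σ τ (X ω) ^ 2
      + 16 * sqDevSum c σ τ (X ω) ^ 2) P := hA.add hC
  have hbound : Integrable (fun ω => s ^ 2 * (2 * sqDevSum d σ τ (X ω) ^ 2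
      + 16 * sqDevSum c σ τ (X ω) ^ 2 + 16 * crossSum c τ (X ω) (W ω) ^ 2)) P :=
    (hAC.add hD).const_mul _
  have hmeas : AEStronglyMeasurable (fun ω => ureLossGap s d σ τ (X ω) (W ω) ^ 2) P := by
    have hXm : AEMeasurable X P :=
      aemeasurable_pi_iff.2 fun i => aemeasurable_of_map_eq_gaussianReal (hX i)
    have hWm : AEMeasurable W P :=
      aemeasurable_pi_iff.2 fun i => (hW i).aestronglyMeasurable.aemeasurable
    exact (((continuous_ureLossGap s d σ τ).measurable.comp_aemeasurable
      (hXm.prodMk hWm)).pow_const 2).aestronglyMeasurable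
  have hle (ω : Ω) : ureLossGap s d σ τ (X ω) (W ω) ^ 2 ≤ s ^ 2 * (2 * sqDevSum d σ τ (X ω) ^ 2
      + 16 * sqDevSum c σ τ (X ω) ^ 2 + 16 * crossSum c τ (X ω) (W ω) ^ 2) :=
    ureLossGap_sq_le s d σ τ (X ω) (W ω)
  refine ⟨hbound.mono' hmeas (ae_of_all _ fun ω => by simpa using hle ω), ?_⟩
  refine (integral_mono_of_nonneg (ae_of_all _ fun ω => sq_nonneg _) hbound
    (ae_of_all _ hle)).trans_eq ?_
  rw [integral_const_mul, integral_add hAC hD, integral_add hA hC, integral_const_mul,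
    integral_const_mul, integral_const_mul, integral_sqDevSum_sq hX hXind,
    integral_sqDevSum_sq hX hXind, integral_crossSum_sq hX hXind hXW hW]
  simp only [c, integral_sub_sq_of_integral_of_variance (hW _) (hWmean _) (hWvar _), mul_add,
    Finset.mul_sum, Finset.sum_add_distrib]
  ring_nf

lemma tendsto_one_div_mul_of_limsup_lt_top {r : ℕ → ℝ} (hr : ∀ K, 0 ≤ r K)
    (hlim : limsup (fun K => (r K : EReal)) atTop < ⊤) :
    Tendsto (fun K : ℕ => 1 / (K : ℝ) * r K) atTop (𝓝 0) := by
  obtain ⟨C, hC, hCtop⟩ := exists_between hlim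
  lift C to ℝ using ⟨hCtop.ne, (bot_le.trans_lt hC).ne'⟩
  have hbound : ∀ᶠ K : ℕ in atTop, 1 / (K : ℝ) * r K ≤ 1 / (K : ℝ) * C := by
    filter_upwards [eventually_lt_of_limsup_lt hC] with K hK
    gcongr
    exact_mod_cast hK.le
  refine tendsto_of_tendsto_of_tendsto_of_le_of_le' tendsto_const_nhds ?_
    (Eventually.of_forall fun K => mul_nonneg (by positivity) (hr K)) hbound
  simpa using tendsto_one_div_atTop_nhds_zero_nat.mul_const C

lemma tendsto_measure_le_of_tendsto_integral_sq {α : Type*} {l : Filter α} {Ω : α → Type*}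
    [∀ a, MeasurableSpace (Ω a)] {μ : ∀ a, Measure (Ω a)} [∀ a, IsFiniteMeasure (μ a)]
    {f : ∀ a, Ω a → ℝ} (hf : ∀ a, Integrable (fun ω => f a ω ^ 2) (μ a))
    (hlim : Tendsto (fun a => ∫ ω, f a ω ^ 2 ∂μ a) l (𝓝 0)) {ε : ℝ} (hε : 0 < ε) :
    Tendsto (fun a => μ a {ω | ε ≤ f a ω}) l (𝓝 0) := by
  have hmarkov (a : α) :
      μ a {ω | ε ≤ f a ω} ≤ ENNReal.ofReal ((ε ^ 2)⁻¹ * ∫ ω, f a ω ^ 2 ∂μ a) := by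
    have hsub : {ω | ε ≤ f a ω} ⊆ {ω | ε ^ 2 ≤ f a ω ^ 2} := fun ω hω =>
      pow_le_pow_left₀ hε.le hω 2
    calc μ a {ω | ε ≤ f a ω} ≤ μ a {ω | ε ^ 2 ≤ f a ω ^ 2} := measure_mono hsub
      _ = ENNReal.ofReal ((μ a).real {ω | ε ^ 2 ≤ f a ω ^ 2}) :=
        (ENNReal.ofReal_toReal (measure_ne_top _ _)).symm
      _ ≤ ENNReal.ofReal ((ε ^ 2)⁻¹ * ∫ ω, f a ω ^ 2 ∂μ a) := by
        refine ENNReal.ofReal_le_ofReal ((le_inv_mul_iff₀ (by positivity)).2 ?_)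
        exact mul_meas_ge_le_integral_of_nonneg (ae_of_all _ fun ω => sq_nonneg _) (hf a) _
  refine tendsto_of_tendsto_of_tendsto_of_le_of_le tendsto_const_nhds ?_ (fun a => zero_le)
    hmarkov
  simpa using ENNReal.tendsto_ofReal (hlim.const_mul (ε ^ 2)⁻¹)

theorem ure_uniform_loss_approximation_variance_weighted_general
(Ω : ℕ → Type*) [mΩ : ∀ K, MeasurableSpace (Ω K)]
    (μ : ∀ K, Measure (Ω K)) (hμ : ∀ K, IsProbabilityMeasure (μ K))
    (d σr σo ξ τv : ∀ K : ℕ, Fin K → ℝ)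
    (τr τo : ∀ K : ℕ, Ω K → Fin K → ℝ)
    (hτr_gauss : ∀ K k, (μ K).map (fun ω => τr K ω k)
        = gaussianReal (τv K k) ⟨σr K k ^ 2, sq_nonneg _⟩)
    (hτr_indep : ∀ K, iIndepFun (fun k ω => τr K ω k) (μ K))
    (hro_indep : ∀ K, IndepFun (fun ω => τr K ω) (fun ω => τo K ω) (μ K))
    (hτo_mem : ∀ K k, MemLp (fun ω => τo K ω k) 2 (μ K))
    (hτo_mean : ∀ K k, ∫ ω, τo K ω k ∂(μ K) = τv K k + ξ K k)
    (hτo_var : ∀ K k, variance (fun ω => τo K ω k) (μ K) = σo K k ^ 2)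
    (hlim1 : limsup (fun K : ℕ =>
        (((1 / (K : ℝ)) * ∑ k, (d K k) ^ 2 * (σr K k) ^ 6 * (ξ K k) ^ 2 : ℝ) : EReal))
        atTop < ⊤)
    (hlim2 : limsup (fun K : ℕ =>
        (((1 / (K : ℝ)) * ∑ k, (d K k) ^ 2 * (σr K k) ^ 6 * (σo K k) ^ 2 : ℝ) : EReal))
        atTop < ⊤)
    (hlim3 : limsup (fun K : ℕ =>
        (((1 / (K : ℝ)) * ∑ k, (d K k) ^ 2 * (σr K k) ^ 8 : ℝ) : EReal))
        atTop < ⊤)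
    (hlim4 : limsup (fun K : ℕ =>
        (((1 / (K : ℝ)) * ∑ k, (d K k) ^ 2 * (σr K k) ^ 4 : ℝ) : EReal))
        atTop < ⊤) :
    Tendsto (fun K : ℕ => ∫ ω,
        (⨆ l : Set.Icc (0 : ℝ) 1,
          |(1 / (K : ℝ)) * ((∑ k, d K k * σr K k ^ 2)
              + (l : ℝ) ^ 2 * ∑ k, d K k * σr K k ^ 4 * (τo K ω k - τr K ω k) ^ 2
              - 2 * (l : ℝ) * ∑ k, d K k * σr K k ^ 4)
            - (1 / (K : ℝ)) * ∑ k, d K k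
                * ((τr K ω k - (l : ℝ) * σr K k ^ 2 * (τr K ω k - τo K ω k))
                    - τv K k) ^ 2|) ^ 2
        ∂(μ K)) atTop (nhds 0)
    ∧ ∀ ε : ℝ, 0 < ε →
        Tendsto (fun K : ℕ => μ K {ω |
          ε ≤ ⨆ l : Set.Icc (0 : ℝ) 1,
            |(1 / (K : ℝ)) * ((∑ k, d K k * σr K k ^ 2)
                + (l : ℝ) ^ 2 * ∑ k, d K k * σr K k ^ 4 * (τo K ω k - τr K ω k) ^ 2
                - 2 * (l : ℝ) * ∑ k, d K k * σr K k ^ 4)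
              - (1 / (K : ℝ)) * ∑ k, d K k
                  * ((τr K ω k - (l : ℝ) * σr K k ^ 2 * (τr K ω k - τo K ω k))
                      - τv K k) ^ 2|})
          atTop (nhds 0) := by
  have hgap (K : ℕ) := integral_ureLossGap_sq_le (1 / (K : ℝ)) (d K) (σr K)
    (σo K) (ξ K) (τv K) (hτr_gauss K) (hτr_indep K) (hro_indep K) (hτo_mem K) (hτo_mean K)
    (hτo_var K)
  have h₁ := tendsto_one_div_mul_of_limsup_lt_top (fun K => by positivity) hlim1
  have h₂ := tendsto_one_div_mul_of_limsup_lt_top (fun K => by positivity) hlim2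
  have h₃ := tendsto_one_div_mul_of_limsup_lt_top (fun K => by positivity) hlim3
  have h₄ := tendsto_one_div_mul_of_limsup_lt_top (fun K => by positivity) hlim4
  have hL2 : Tendsto (fun K => ∫ ω, ureLossGap (1 / (K : ℝ)) (d K) (σr K) (τv K) (τr K ω)
      (τo K ω) ^ 2 ∂μ K) atTop (𝓝 0) := by
    refine squeeze_zero (fun K => integral_nonneg fun ω => sq_nonneg _) (fun K => (hgap K).2) ?_
    have hbound := (((h₄.const_mul (2 * stdGaussianSqDevMoment)).add
      (h₃.const_mul (16 * stdGaussianSqDevMoment))).add (h₂.const_mul 16)).add (h₁.const_mul 16)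
    simp only [mul_zero, add_zero] at hbound
    exact hbound.congr fun K => by ring
  exact ⟨hL2, fun ε hε =>
    tendsto_measure_le_of_tendsto_integral_sq (fun K => (hgap K).1) hL2 hε⟩

/-- **Uniform convergence of the URE to the loss (variance-weighted shrinkage).**
Under the four limsup moment conditions,
`sup_{0 ≤ λ ≤ 1} |URE_K(λ) − L_K(λ)| → 0` in `L²` (and hence in probability) as
`K → ∞`, where
`URE_K(λ) = (1/K)[∑_k d_k σ_rk² + λ² ∑_k d_k σ_rk⁴ Δ_k² − 2λ ∑_k d_k σ_rk⁴]` and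
`L_K(λ) = (1/K) ∑_k d_k (τ̂_rk − λ σ_rk² (τ̂_rk − τ̂_ok) − τ_k)²`. -/
theorem ure_uniform_loss_approximation_variance_weighted
(Ω : ℕ → Type*) [mΩ : ∀ K, MeasurableSpace (Ω K)]
    (μ : ∀ K, Measure (Ω K)) (hμ : ∀ K, IsProbabilityMeasure (μ K))
    (d σr σo ξ τv : ∀ K : ℕ, Fin K → ℝ)
    (τr τo : ∀ K : ℕ, Ω K → Fin K → ℝ)
    (hd : ∀ K k, 0 < d K k) (hdsum : ∀ K, 1 ≤ K → ∑ k, d K k = 1)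
    (hσr : ∀ K k, 0 < σr K k)
    (hτr_meas : ∀ K k, Measurable fun ω => τr K ω k)
    (hτo_meas : ∀ K k, Measurable fun ω => τo K ω k)
    (hτr_gauss : ∀ K k, (μ K).map (fun ω => τr K ω k)
        = gaussianReal (τv K k) ⟨σr K k ^ 2, sq_nonneg _⟩)
    (hτr_indep : ∀ K, iIndepFun (fun k ω => τr K ω k) (μ K))
    (hτo_indep : ∀ K, iIndepFun (fun k ω => τo K ω k) (μ K))
    (hro_indep : ∀ K, IndepFun (fun ω => τr K ω) (fun ω => τo K ω) (μ K))
    (hτo_mem : ∀ K k, MemLp (fun ω => τo K ω k) 2 (μ K))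
    (hτo_mean : ∀ K k, ∫ ω, τo K ω k ∂(μ K) = τv K k + ξ K k)
    (hτo_var : ∀ K k, variance (fun ω => τo K ω k) (μ K) = σo K k ^ 2)
    (hlim1 : limsup (fun K : ℕ =>
        (((1 / (K : ℝ)) * ∑ k, (d K k) ^ 2 * (σr K k) ^ 6 * (ξ K k) ^ 2 : ℝ) : EReal))
        atTop < ⊤)
    (hlim2 : limsup (fun K : ℕ =>
        (((1 / (K : ℝ)) * ∑ k, (d K k) ^ 2 * (σr K k) ^ 6 * (σo K k) ^ 2 : ℝ) : EReal))
        atTop < ⊤)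
    (hlim3 : limsup (fun K : ℕ =>
        (((1 / (K : ℝ)) * ∑ k, (d K k) ^ 2 * (σr K k) ^ 8 : ℝ) : EReal))
        atTop < ⊤)
    (hlim4 : limsup (fun K : ℕ =>
        (((1 / (K : ℝ)) * ∑ k, (d K k) ^ 2 * (σr K k) ^ 4 : ℝ) : EReal))
        atTop < ⊤) :
    Tendsto (fun K : ℕ => ∫ ω,
        (⨆ l : Set.Icc (0 : ℝ) 1,
          |(1 / (K : ℝ)) * ((∑ k, d K k * σr K k ^ 2)
              + (l : ℝ) ^ 2 * ∑ k, d K k * σr K k ^ 4 * (τo K ω k - τr K ω k) ^ 2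
              - 2 * (l : ℝ) * ∑ k, d K k * σr K k ^ 4)
            - (1 / (K : ℝ)) * ∑ k, d K k
                * ((τr K ω k - (l : ℝ) * σr K k ^ 2 * (τr K ω k - τo K ω k))
                    - τv K k) ^ 2|) ^ 2
        ∂(μ K)) atTop (nhds 0)
    ∧ ∀ ε : ℝ, 0 < ε →
        Tendsto (fun K : ℕ => μ K {ω |
          ε ≤ ⨆ l : Set.Icc (0 : ℝ) 1,
            |(1 / (K : ℝ)) * ((∑ k, d K k * σr K k ^ 2)
                + (l : ℝ) ^ 2 * ∑ k, d K k * σr K k ^ 4 * (τo K ω k - τr K ω k) ^ 2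
                - 2 * (l : ℝ) * ∑ k, d K k * σr K k ^ 4)
              - (1 / (K : ℝ)) * ∑ k, d K k
                  * ((τr K ω k - (l : ℝ) * σr K k ^ 2 * (τr K ω k - τo K ω k))
                      - τv K k) ^ 2|})
          atTop (nhds 0) :=
  ure_uniform_loss_approximation_variance_weighted_general Ω (mΩ := mΩ) μ hμ d σr σo ξ τv τr τo
    hτr_gauss hτr_indep hro_indep hτo_mem hτo_mean hτo_var hlim1 hlim2 hlim3 hlim4
end
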